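/- arXiv:2008.10371 — 5 statements merged into one kernel-verified Lean document; each statement's English description precedes it below -/
import Mathlib

section
/- The chain A₂ = Σ_{σ ∈ Σ₄} sgn(σ) · (e₁ − e_{σ(3)}) · (h_{1,σ(1)} − h_{1,1}) · (h_{2,σ(2)} − h_{2,1}) in the Świątkowski complex of the theta graph Θ₄ satisfies ∂A₂ = 0. -/
/-!
A combinatorial model of the Świątkowski chain complex of a finite graph
(finite CW-complex of dimension ≤ 1), computing the homology of its unordered
configuration spaces (An–Drummond-Cole–Knudsen).

A graph is given by a vertex type `V`, an edge type `E` and an endpoint map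
`ends : E → V × V` (self-loops and multiple edges are allowed).  A half-edge is
a pair `(e, b) : E × Bool`, whose vertex is the corresponding endpoint of `e`.

We work with the ℤ-basis of the Świątkowski complex consisting of a monomial
`m : E →₀ ℕ` in the edges together with a choice, for each vertex `v`, of a
local generator from `S(v) = ℤ⟨∅, v, h ∈ H(v)⟩`: a half-edge at `v`
(`Sum.inl`), the vertex itself (`Sum.inr true`), or `∅` (`Sum.inr false`).
The differential is the ℤ[E]-linear derivation with `∂h = e(h) - v(h)`,
with Koszul signs determined by a fixed enumeration of the vertices.
`degB` is the homological degree (number of half-edge factors) and `wtB` is the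
weight (number of particles).  `hasDW i k` is the subgroup of chains of pure
degree `i` and weight `k`; `cyc i k` the corresponding cycles, `bdry i k` the
boundaries of degree/weight `(i+1, k)` chains, and `Hgr i k` their quotient,
which is `H_i(B_k Γ)`.  `stab e` is edge stabilization (multiplication by `e`).
-/

namespace Swiatkowski

variable {V E : Type} [Fintype V] [Fintype E] [DecidableEq V] [DecidableEq E]

/-- The vertex of a half-edge. -/
def vtx (ends : E → V × V) (h : E × Bool) : V :=
  cond h.2 (ends h.1).2 (ends h.1).1

/-- The local generators at a vertex `v`: a half-edge at `v`, or the vertex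
generator (`true`), or `∅` (`false`). -/
abbrev VGen (ends : E → V × V) (v : V) : Type :=
  {h : E × Bool // vtx ends h = v} ⊕ Bool

/-- A choice of local generator at every vertex. -/
abbrev States (ends : E → V × V) : Type := ∀ v : V, VGen ends v

/-- The ℤ-basis of the Świątkowski complex: an edge monomial together with a
state. -/
abbrev Bas (ends : E → V × V) : Type := (E →₀ ℕ) × States ends

/-- The underlying ℤ-module of the Świątkowski complex. -/
abbrev SC (ends : E → V × V) : Type := Bas ends →₀ ℤ

variable (ends : E → V × V)

/-- An enumeration of the vertices, used for Koszul signs. -/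
noncomputable def idx : V → ℕ := fun v => ((Fintype.equivFin V) v : ℕ)

/-- The Koszul sign of the half-edge slot at `v` inside the state `f`. -/
noncomputable def sgn (f : States ends) (v : V) : ℤ :=
  (-1) ^ (Finset.univ.filter fun w => idx w < idx v ∧ (f w).isLeft = true).card

/-- Homological degree of a basis element: its number of half-edge factors. -/
def degB (b : Bas ends) : ℕ :=
  (Finset.univ.filter fun v => (b.2 v).isLeft = true).card

/-- Weight (particle number) of a basis element. -/
def wtB (b : Bas ends) : ℕ :=
  (b.1.sum fun _ n => n) + ∑ v : V, Sum.elim (fun _ => 1) (fun t => cond t 1 0) (b.2 v)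

/-- Value of the differential on a basis element: the signed sum over the
half-edge slots `h` of the substitutions `h ↦ e(h)` and `h ↦ v(h)`. -/
noncomputable def Db (b : Bas ends) : SC ends :=
  ∑ v : V,
    (match b.2 v with
      | Sum.inl h =>
          sgn ends b.2 v •
            (Finsupp.single (b.1 + Finsupp.single h.1.1 1,
                Function.update b.2 v (Sum.inr false)) (1 : ℤ)
              - Finsupp.single (b.1, Function.update b.2 v (Sum.inr true)) (1 : ℤ))
      | Sum.inr _ => 0)

/-- The differential of the Świątkowski complex. -/
noncomputable def D : SC ends →ₗ[ℤ] SC ends :=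
  Finsupp.linearCombination ℤ (Db ends)

/-- The subgroup of chains of pure homological degree `i` and weight `k`. -/
noncomputable def hasDW (i k : ℕ) : Submodule ℤ (SC ends) where
  carrier := {x | ∀ b ∈ x.support, degB ends b = i ∧ wtB ends b = k}
  add_mem' := by
    intro x y hx hy b hb
    rcases Finset.mem_union.mp (Finsupp.support_add hb) with h | h
    exacts [hx b h, hy b h]
  zero_mem' := by simp
  smul_mem' := by
    intro c x hx b hb
    exact hx b (Finsupp.support_smul hb)

/-- Cycles of degree `i` and weight `k`. -/
noncomputable def cyc (i k : ℕ) : Submodule ℤ (SC ends) := LinearMap.ker (D ends) ⊓ hasDW ends i k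

/-- Boundaries of degree `i` and weight `k` chains. -/
noncomputable def bdry (i k : ℕ) : Submodule ℤ (SC ends) := Submodule.map (D ends) (hasDW ends (i + 1) k)

/-- The homology `H_i(B_k Γ)` of the weight-`k` Świątkowski complex. -/
noncomputable def Hgr (i k : ℕ) :=
  cyc ends i k ⧸ Submodule.comap (cyc ends i k).subtype (bdry ends i k)

noncomputable instance (i k : ℕ) : AddCommGroup (Hgr ends i k) :=
  inferInstanceAs (AddCommGroup
    (cyc ends i k ⧸ Submodule.comap (cyc ends i k).subtype (bdry ends i k)))

/-- Edge stabilization: multiplication by the edge `e`. -/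
noncomputable def stab (e : E) : SC ends →ₗ[ℤ] SC ends :=
  Finsupp.lmapDomain ℤ ℤ fun b => (b.1 + Finsupp.single e 1, b.2)

end Swiatkowski

namespace Theta4

open Swiatkowski

/-- The theta graph `Θ₄`: two vertices (`false` and `true`) joined by four
edges. -/
def ends : Fin 4 → Bool × Bool := fun _ => (false, true)

/-- The state placing the half-edge of edge `a` at the first vertex, the
half-edge of edge `b` at the second vertex (the chain `h_{1,a} · h_{2,b}`). -/
def state2 (a b : Fin 4) : States ends := fun v =>
  match v with
  | false => Sum.inl ⟨(a, false), rfl⟩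
  | true => Sum.inl ⟨(b, true), rfl⟩

/-- The basis chain `h_{1,a} ⊗ h_{2,b}` of the Świątkowski complex of `Θ₄`. -/
noncomputable def hh (a b : Fin 4) : SC ends :=
  Finsupp.single ((0 : Fin 4 →₀ ℕ), state2 a b) (1 : ℤ)

/-- The chain
`A₂ = Σ_{σ ∈ Σ₄} sgn(σ) (e₁ − e_{σ(3)})(h_{1,σ(1)} − h_{1,1})(h_{2,σ(2)} − h_{2,1})`
in the Świątkowski complex of `Θ₄` (indices shifted to start at `0`). -/
noncomputable def A2 : SC ends :=
  ∑ σ : Equiv.Perm (Fin 4),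
    ((Equiv.Perm.sign σ : ℤˣ) : ℤ) •
      ((stab ends 0 - stab ends (σ 2))
        (hh (σ 0) (σ 1) - hh 0 (σ 1) - hh (σ 0) 0 + hh 0 0))

/-!
A summand of `A₂` involving at most two of `σ 0, σ 1, σ 2` is fixed by the transposition of
the two remaining positions, so its signed sum over `σ` vanishes; only `-e_{σ 2} h_{1,σ 0} h_{2,σ 1}`
survives. Its boundary consists of the four families `e_{σ 2} e_{σ 0} h_{2,σ 1}`,
`e_{σ 2} v₁ h_{2,σ 1}`, `e_{σ 2} e_{σ 1} h_{1,σ 0}`, `e_{σ 2} h_{1,σ 0} v₂`, and each of them is again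
fixed by a transposition (`0 ↔ 2`, `0 ↔ 3`, `1 ↔ 2`, `1 ↔ 3`; edge monomials commute), so `∂A₂ = 0`.
-/

end Theta4

open Finsupp Equiv Equiv.Perm

theorem Equiv.Perm.sum_sign_smul_eq_zero_of_mul_swap {α M : Type*} [Fintype α] [DecidableEq α]
    [AddCommGroup M] (f : Perm α → M) {i j : α} (hij : i ≠ j)
    (hf : ∀ σ, f (σ * swap i j) = f σ) :
    ∑ σ : Perm α, ((sign σ : ℤˣ) : ℤ) • f σ = 0 := by
  refine Finset.sum_involution (fun σ _ => σ * swap i j) (fun σ _ => ?_) (fun σ _ _ => ?_)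
    (fun _ _ => Finset.mem_univ _) (fun σ _ => mul_swap_involutive i j σ)
  · rw [hf, Perm.sign_mul, sign_swap hij]
    simp
  · exact (not_congr mul_swap_eq_iff).mpr hij

namespace Swiatkowski

theorem stab_single {V E : Type} (ends : E → V × V) (e : E) (b : Bas ends) (c : ℤ) :
    stab ends e (single b c) = single (b.1 + single e 1, b.2) c := by
  simp [stab, mapDomain_single]

theorem D_single {V E : Type} [Fintype V] [DecidableEq V] (ends : E → V × V) (b : Bas ends) :
    D ends (single b 1) = Db ends b := by
  rw [D, linearCombination_single, one_smul]

theorem sgn_congr {V E : Type} [Fintype V] (ends : E → V × V) {f g : States ends}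
    (h : ∀ w, (f w).isLeft = (g w).isLeft) (v : V) : sgn ends f v = sgn ends g v := by
  simp only [sgn, h]

end Swiatkowski

namespace Theta4

open Swiatkowski

def stateFst (a : Fin 4) (t : Bool) : States ends
  | false => Sum.inl ⟨(a, false), rfl⟩
  | true => Sum.inr t

def stateSnd (b : Fin 4) (t : Bool) : States ends
  | false => Sum.inr t
  | true => Sum.inl ⟨(b, true), rfl⟩

theorem update_state2_false (a b : Fin 4) (t : Bool) :
    Function.update (state2 a b) false (Sum.inr t) = stateSnd b t := by
  funext v; cases v <;> simp [state2, stateSnd]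

theorem update_state2_true (a b : Fin 4) (t : Bool) :
    Function.update (state2 a b) true (Sum.inr t) = stateFst a t := by
  funext v; cases v <;> simp [state2, stateFst]

/-- Which vertex `idx` puts first is not determined, so we only use that the Koszul sign of a
half-edge slot does not depend on the half-edges. -/
noncomputable def slotSign (v : Bool) : ℤ := sgn ends (state2 0 0) v

theorem sgn_state2 (a b : Fin 4) (v : Bool) : sgn ends (state2 a b) v = slotSign v :=
  sgn_congr ends (fun w => by cases w <;> rfl) v

theorem D_stab_hh (x a b : Fin 4) :
    D ends (stab ends x (hh a b)) =
      slotSign false • (single (single x 1 + single a 1, stateSnd b false) 1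
          - single (single x 1, stateSnd b true) 1)
        + slotSign true • (single (single x 1 + single b 1, stateFst a false) 1
          - single (single x 1, stateFst a true) 1) := by
  rw [hh, stab_single, zero_add, D_single, Db, Fintype.sum_bool]
  simp only [state2, sgn_state2, update_state2_false, update_state2_true]
  abel

theorem A2_eq_neg_sum :
    A2 = -∑ σ : Perm (Fin 4), ((sign σ : ℤˣ) : ℤ) • stab ends (σ 2) (hh (σ 0) (σ 1)) := by
  have h₂₃ := sum_sign_smul_eq_zero_of_mul_swap
    (fun σ => stab ends 0 (hh (σ 0) (σ 1) - hh 0 (σ 1) - hh (σ 0) 0 + hh 0 0))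
    (i := 2) (j := 3) (by decide) (fun σ => by simp [swap_apply_of_ne_of_ne])
  have h₀₃ := sum_sign_smul_eq_zero_of_mul_swap (fun σ => stab ends (σ 2) (hh 0 (σ 1) - hh 0 0))
    (i := 0) (j := 3) (by decide) (fun σ => by simp [swap_apply_of_ne_of_ne])
  have h₁₃ := sum_sign_smul_eq_zero_of_mul_swap (fun σ => stab ends (σ 2) (hh (σ 0) 0))
    (i := 1) (j := 3) (by decide) (fun σ => by simp [swap_apply_of_ne_of_ne])
  simp only [A2, LinearMap.sub_apply, map_add, map_sub, smul_add, smul_sub,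
    Finset.sum_add_distrib, Finset.sum_sub_distrib] at h₂₃ h₀₃ h₁₃ ⊢
  linear_combination (norm := module) h₂₃ + h₀₃ + h₁₃

theorem sum_sign_smul_D_stab_hh :
    ∑ σ : Perm (Fin 4), ((sign σ : ℤˣ) : ℤ) • D ends (stab ends (σ 2) (hh (σ 0) (σ 1))) = 0 := by
  have h₀₂ := sum_sign_smul_eq_zero_of_mul_swap
    (fun σ => (single (single (σ 2) 1 + single (σ 0) 1, stateSnd (σ 1) false) 1 : SC ends))
    (i := 0) (j := 2) (by decide) (fun σ => by simp [add_comm, swap_apply_of_ne_of_ne])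
  have h₀₃ := sum_sign_smul_eq_zero_of_mul_swap
    (fun σ => (single (single (σ 2) 1, stateSnd (σ 1) true) 1 : SC ends))
    (i := 0) (j := 3) (by decide) (fun σ => by simp [swap_apply_of_ne_of_ne])
  have h₁₂ := sum_sign_smul_eq_zero_of_mul_swap
    (fun σ => (single (single (σ 2) 1 + single (σ 1) 1, stateFst (σ 0) false) 1 : SC ends))
    (i := 1) (j := 2) (by decide) (fun σ => by simp [add_comm, swap_apply_of_ne_of_ne])
  have h₁₃ := sum_sign_smul_eq_zero_of_mul_swap
    (fun σ => (single (single (σ 2) 1, stateFst (σ 0) true) 1 : SC ends))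
    (i := 1) (j := 3) (by decide) (fun σ => by simp [swap_apply_of_ne_of_ne])
  simp only [D_stab_hh, smul_add, smul_sub, smul_comm _ (slotSign _), Finset.sum_add_distrib,
    Finset.sum_sub_distrib, ← Finset.smul_sum, h₀₂, h₀₃, h₁₂, h₁₃, sub_zero, smul_zero, add_zero]

/-- The chain `A₂` in the Świątkowski complex of the theta
graph `Θ₄` satisfies `∂A₂ = 0`. -/
theorem dA2_eq_zero : D ends A2 = 0 := by
  simp only [A2_eq_neg_sum, map_neg, map_sum, map_zsmul, sum_sign_smul_D_stab_hh, neg_zero]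

end Theta4
end

section
/- Any two star classes in H₁(B₂(K₃,₃)) are equal regardless of choice of vertex, half-edges, and orientation; in particular, every star class in H₁(B₂(K₃,₃)) is 2-torsion. -/
namespace K33

open Swiatkowski

/-- The complete bipartite graph `K₃,₃`, with vertices `(false, i) = aᵢ` and
`(true, j) = bⱼ`, and edges `(i, j)` joining `aᵢ` to `bⱼ`. -/
def ends : Fin 3 × Fin 3 → (Bool × Fin 3) × (Bool × Fin 3) :=
  fun e => ((false, e.1), (true, e.2))

/-- The half-edge at the vertex `v` pointing towards the `t`-th vertex of the
opposite part. -/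
def hAt (v : Bool × Fin 3) (t : Fin 3) : (Fin 3 × Fin 3) × Bool :=
  if v.1 then ((t, v.2), true) else ((v.2, t), false)

theorem hAt_vtx (v : Bool × Fin 3) (t : Fin 3) : vtx ends (hAt v t) = v := by
  rcases v with ⟨b, i⟩; cases b <;> rfl

/-- The state placing the half-edge `hAt v t` at the vertex `v` and `∅` at all
other vertices. -/
def stateAt (v : Bool × Fin 3) (t : Fin 3) : States ends :=
  Function.update (fun w => (Sum.inr false : VGen ends w)) v
    (Sum.inl ⟨hAt v t, hAt_vtx v t⟩)

/-- The degree-one basis chain of the half-edge `hAt v t`. -/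
noncomputable def sA (v : Bool × Fin 3) (t : Fin 3) : SC ends :=
  Finsupp.single ((0 : (Fin 3 × Fin 3) →₀ ℕ), stateAt v t) (1 : ℤ)

/-- The star cycle at a (trivalent) vertex `v` of `K₃,₃`, for the ordering of
its three half-edges given by the permutation `σ`:
`e₃(h₁ − h₂) + e₂(h₃ − h₁) + e₁(h₂ − h₃)`. -/
noncomputable def st (v : Bool × Fin 3) (σ : Equiv.Perm (Fin 3)) : SC ends :=
  stab ends (hAt v (σ 2)).1 (sA v (σ 0) - sA v (σ 1))
    + stab ends (hAt v (σ 1)).1 (sA v (σ 2) - sA v (σ 0))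
    + stab ends (hAt v (σ 0)).1 (sA v (σ 1) - sA v (σ 2))

end K33

/-!
The squares `a₀b₁a₂b₀` and `a₀b₂a₁b₀` of `K₃,₃` are weight-one cycles meeting exactly in the
edge `a₀b₀`. Their product in the Świątkowski complex, with the terms at the two common vertices
left out, is a degree-two chain. As each square is a cycle, its boundary consists only of the
local terms `∂x·y - ∂y·x` at `a₀` and `b₀` that were left out, and for two differences of
half-edges at a trivalent vertex this local term is a star class. So the star class at `a₀` is
homologous to one at `b₀`, where the orderings at `a₀` and `b₀` can be chosen independently.
Taking both orientations at one end shows each star class to be homologous to its negative, and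
as every `aᵢ` is adjacent to every `bⱼ`, all star classes coincide.
-/

namespace Swiatkowski

section ordSign

variable {V E : Type} [Fintype V]

noncomputable def ordSign (v w : V) : ℤ := if idx w < idx v then -1 else 1

lemma ordSign_mul_self (v w : V) : ordSign v w * ordSign v w = 1 := by
  unfold ordSign; split <;> norm_num

lemma ordSign_swap {v w : V} (hvw : v ≠ w) : ordSign w v = -ordSign v w := by
  unfold ordSign
  rcases lt_trichotomy (idx v) (idx w) with h | h | h
  · rw [if_pos h, if_neg (not_lt.mpr h.le)]
  · exact absurd ((Fintype.equivFin V).injective (Fin.ext h)) hvw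
  · rw [if_neg (not_lt.mpr h.le), if_pos h]; norm_num

lemma sgn_eq_ordSign (ends : E → V × V) {v w : V} (hvw : v ≠ w) (F : States ends)
    (hF : ∀ u, (F u).isLeft = true ↔ u = v ∨ u = w) :
    sgn ends F v = ordSign v w := by
  have hfilter : (Finset.univ.filter fun u => idx u < idx v ∧ (F u).isLeft = true)
      = if idx w < idx v then {w} else ∅ := by
    ext u
    simp only [Finset.mem_filter, Finset.mem_univ, true_and, hF u]
    split_ifs with h
    · simp only [Finset.mem_singleton]
      constructor
      · rintro ⟨hlt, rfl | rfl⟩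
        exacts [absurd hlt (lt_irrefl _), rfl]
      · rintro rfl; exact ⟨h, Or.inr rfl⟩
    · simp only [Finset.notMem_empty, iff_false, not_and]
      rintro hlt (rfl | rfl)
      exacts [lt_irrefl _ hlt, h hlt]
  rw [sgn, hfilter, ordSign]
  split <;> simp

end ordSign

variable {V E : Type} [DecidableEq V] (ends : E → V × V)

abbrev HalfEdgeAt (v : V) : Type := {h : E × Bool // vtx ends h = v}

def oneState (v : V) (h : HalfEdgeAt ends v) : States ends :=
  Function.update (fun w => (Sum.inr false : VGen ends w)) v (Sum.inl h)

def twoState (v w : V) (h : HalfEdgeAt ends v) (k : HalfEdgeAt ends w) : States ends :=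
  Function.update (oneState ends w k) v (Sum.inl h)

noncomputable def half (v : V) (h : HalfEdgeAt ends v) : SC ends :=
  Finsupp.single (0, oneState ends v h) 1

/-- The chain `w · h`: the vertex generator at `w` times the half-edge `h` at `v`. -/
noncomputable def vtxHalf (w v : V) (h : HalfEdgeAt ends v) : SC ends :=
  Finsupp.single (0, Function.update (oneState ends v h) w (Sum.inr true)) 1

noncomputable def starCycle (v : V) (h₁ h₂ h₃ : HalfEdgeAt ends v) : SC ends :=
  stab ends h₃.1.1 (half ends v h₁ - half ends v h₂)
    + stab ends h₂.1.1 (half ends v h₃ - half ends v h₁)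
    + stab ends h₁.1.1 (half ends v h₂ - half ends v h₃)

lemma starCycle_rotate (v : V) (h₁ h₂ h₃ : HalfEdgeAt ends v) :
    starCycle ends v h₂ h₃ h₁ = starCycle ends v h₁ h₂ h₃ := by
  unfold starCycle; abel

lemma starCycle_swap (v : V) (h₁ h₂ h₃ : HalfEdgeAt ends v) :
    starCycle ends v h₁ h₃ h₂ = -starCycle ends v h₁ h₂ h₃ := by
  simp only [starCycle, map_sub]; abel

lemma stab_half (e : E) (v : V) (h : HalfEdgeAt ends v) :
    stab ends e (half ends v h) = Finsupp.single (Finsupp.single e 1, oneState ends v h) 1 := by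
  rw [half, stab, Finsupp.lmapDomain_apply, Finsupp.mapDomain_single, zero_add]

section twoState

variable {ends} {v w : V} (h : HalfEdgeAt ends v) (k : HalfEdgeAt ends w)

lemma update_oneState_of_ne (hvw : v ≠ w) :
    Function.update (oneState ends w k) v (Sum.inr false) = oneState ends w k :=
  Function.update_eq_self_iff.mpr (by rw [oneState, Function.update_of_ne hvw])

lemma twoState_apply_fst : twoState ends v w h k v = Sum.inl h :=
  Function.update_self _ _ _

lemma twoState_apply_snd (hvw : v ≠ w) : twoState ends v w h k w = Sum.inl k := by
  rw [twoState, Function.update_of_ne (Ne.symm hvw), oneState, Function.update_self]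

lemma twoState_apply_of_ne {u : V} (hv : u ≠ v) (hw : u ≠ w) :
    twoState ends v w h k u = Sum.inr false := by
  rw [twoState, Function.update_of_ne hv, oneState, Function.update_of_ne hw]

lemma twoState_isLeft_iff (hvw : v ≠ w) (u : V) :
    (twoState ends v w h k u).isLeft = true ↔ u = v ∨ u = w := by
  rcases eq_or_ne u v with rfl | hv
  · simp [twoState_apply_fst]
  · rcases eq_or_ne u w with rfl | hw
    · simp [twoState_apply_snd h k hvw]
    · simp [twoState_apply_of_ne h k hv hw, hv, hw]

lemma update_twoState_fst (g : Bool) :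
    Function.update (twoState ends v w h k) v (Sum.inr g)
      = Function.update (oneState ends w k) v (Sum.inr g) := by
  rw [twoState, Function.update_idem]

lemma update_twoState_snd (hvw : v ≠ w) (g : Bool) :
    Function.update (twoState ends v w h k) w (Sum.inr g)
      = Function.update (oneState ends v h) w (Sum.inr g) := by
  funext u
  rcases eq_or_ne u w with rfl | hw
  · simp only [Function.update_self]
  · rw [Function.update_of_ne hw, Function.update_of_ne hw]
    rcases eq_or_ne u v with rfl | hv
    · rw [twoState_apply_fst, oneState, Function.update_self]
    · rw [twoState_apply_of_ne h k hv hw, oneState, Function.update_of_ne hv]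

end twoState

variable [Fintype V]

/-- The product `h · k` of half-edges at distinct vertices; the factor `ordSign v w` cancels the
Koszul sign of the vertex enumeration, so that `pair v w h k = - pair w v k h`. -/
noncomputable def pair (v w : V) (h : HalfEdgeAt ends v) (k : HalfEdgeAt ends w) : SC ends :=
  ordSign v w • Finsupp.single (0, twoState ends v w h k) 1

lemma D_pair {v w : V} (hvw : v ≠ w) (h : HalfEdgeAt ends v) (k : HalfEdgeAt ends w) :
    D ends (pair ends v w h k)
      = stab ends h.1.1 (half ends w k) - vtxHalf ends v w k
        - stab ends k.1.1 (half ends v h) + vtxHalf ends w v h := by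
  have hsgn_fst : sgn ends (twoState ends v w h k) v = ordSign v w :=
    sgn_eq_ordSign ends hvw _ (twoState_isLeft_iff h k hvw)
  have hsgn_snd : sgn ends (twoState ends v w h k) w = -ordSign v w := by
    rw [← ordSign_swap hvw]
    exact sgn_eq_ordSign ends (Ne.symm hvw) _
      fun u => (twoState_isLeft_iff h k hvw u).trans or_comm
  rw [pair, map_zsmul, D, Finsupp.linearCombination_single, one_smul, Db,
    ← Finset.sum_subset (Finset.subset_univ {v, w}) fun u _ hu => ?_]
  · simp only [Finset.sum_pair hvw, twoState_apply_fst, twoState_apply_snd h k hvw, hsgn_fst,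
      hsgn_snd, update_twoState_fst, update_twoState_snd h k hvw,
      update_oneState_of_ne k hvw, update_oneState_of_ne h (Ne.symm hvw), zero_add,
      ← stab_half]
    rw [← vtxHalf, ← vtxHalf, smul_add, smul_smul, ordSign_mul_self, one_smul, neg_smul,
      smul_neg, smul_smul, ordSign_mul_self, one_smul]
    abel
  · rw [Finset.mem_insert, Finset.mem_singleton, not_or] at hu
    simp only [twoState_apply_of_ne h k hu.1 hu.2]

noncomputable def dpair (v w : V) (h h' : HalfEdgeAt ends v) (k k' : HalfEdgeAt ends w) :
    SC ends :=
  pair ends v w h k - pair ends v w h k' - pair ends v w h' k + pair ends v w h' k'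

lemma D_dpair {v w : V} (hvw : v ≠ w) (h h' : HalfEdgeAt ends v) (k k' : HalfEdgeAt ends w) :
    D ends (dpair ends v w h h' k k')
      = (stab ends h.1.1 - stab ends h'.1.1) (half ends w k - half ends w k')
        - (stab ends k.1.1 - stab ends k'.1.1) (half ends v h - half ends v h') := by
  simp only [dpair, map_add, map_sub, D_pair ends hvw, LinearMap.sub_apply]
  abel

variable [DecidableEq E]

lemma pair_mem_hasDW {v w : V} (hvw : v ≠ w) (h : HalfEdgeAt ends v) (k : HalfEdgeAt ends w) :
    pair ends v w h k ∈ hasDW ends 2 2 := by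
  refine Submodule.smul_mem _ _ fun b hb => ?_
  obtain rfl : b = (0, twoState ends v w h k) := by simpa using Finsupp.support_single_subset hb
  constructor
  · rw [degB, show (Finset.univ.filter fun u => (twoState ends v w h k u).isLeft = true) = {v, w}
      by ext u; simp [twoState_isLeft_iff h k hvw u], Finset.card_pair hvw]
  · rw [wtB, Finsupp.sum_zero_index, zero_add,
      ← Finset.sum_subset (Finset.subset_univ {v, w}) fun u _ hu => ?_]
    · simp only [Finset.sum_pair hvw, twoState_apply_fst, twoState_apply_snd h k hvw]
      rfl
    · rw [Finset.mem_insert, Finset.mem_singleton, not_or] at hu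
      simp only [twoState_apply_of_ne h k hu.1 hu.2]
      rfl

lemma dpair_mem_hasDW {v w : V} (hvw : v ≠ w) (h h' : HalfEdgeAt ends v)
    (k k' : HalfEdgeAt ends w) : dpair ends v w h h' k k' ∈ hasDW ends 2 2 := by
  have hmem := pair_mem_hasDW ends hvw
  exact add_mem (sub_mem (sub_mem (hmem h k) (hmem h k')) (hmem h' k)) (hmem h' k')

end Swiatkowski

namespace K33

open Swiatkowski

lemma hAt_false_fst (i t : Fin 3) : (hAt (false, i) t).1 = (i, t) := rfl

lemma hAt_true_fst (j t : Fin 3) : (hAt (true, j) t).1 = (t, j) := rfl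

def halfEdge (v : Bool × Fin 3) (t : Fin 3) : HalfEdgeAt ends v := ⟨hAt v t, hAt_vtx v t⟩

lemma st_eq_starCycle (v : Bool × Fin 3) (σ : Equiv.Perm (Fin 3)) :
    st v σ = starCycle ends v (halfEdge v (σ 0)) (halfEdge v (σ 1)) (halfEdge v (σ 2)) := rfl

lemma st_mul_finRotate (v : Bool × Fin 3) (σ : Equiv.Perm (Fin 3)) :
    st v (σ * finRotate 3) = st v σ := by
  have hrot : finRotate 3 0 = 1 ∧ finRotate 3 1 = 2 ∧ finRotate 3 2 = 0 := by decide
  rw [st_eq_starCycle, st_eq_starCycle]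
  simp only [Equiv.Perm.mul_apply, hrot]
  exact starCycle_rotate ..

lemma st_mul_swap (v : Bool × Fin 3) (σ : Equiv.Perm (Fin 3)) :
    st v (σ * Equiv.swap 1 2) = -st v σ := by
  have hswap : Equiv.swap (1 : Fin 3) 2 0 = 0 ∧ Equiv.swap (1 : Fin 3) 2 1 = 2 ∧
      Equiv.swap (1 : Fin 3) 2 2 = 1 := by decide
  rw [st_eq_starCycle, st_eq_starCycle]
  simp only [Equiv.Perm.mul_apply, hswap]
  exact starCycle_swap ..

lemma exists_apply_zero_st_eq (v : Bool × Fin 3) (σ : Equiv.Perm (Fin 3)) (j : Fin 3) :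
    ∃ ρ : Equiv.Perm (Fin 3), ρ 0 = j ∧ st v ρ = st v σ := by
  obtain ⟨k, rfl⟩ := σ.surjective j
  fin_cases k
  · exact ⟨σ, rfl, rfl⟩
  · exact ⟨σ * finRotate 3, rfl, st_mul_finRotate v σ⟩
  · exact ⟨σ * finRotate 3 * finRotate 3, rfl, by rw [st_mul_finRotate, st_mul_finRotate]⟩

noncomputable def dpairAt (v w : Bool × Fin 3) (s s' t t' : Fin 3) : SC ends :=
  dpair ends v w (halfEdge v s) (halfEdge v s') (halfEdge w t) (halfEdge w t')

/-- With `aᵢ = (false, p i)` and `bⱼ = (true, r j)`, the product of the squares `a₀b₂a₁b₀` and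
`a₀b₁a₂b₀`, each contributing at a vertex its outgoing minus its incoming half-edge, with the
terms at `a₀` and `b₀` left out. -/
noncomputable def squareProduct (p r : Equiv.Perm (Fin 3)) : SC ends :=
  dpairAt (false, p 0) (true, r 1) (r 2) (r 0) (p 2) (p 0)
    + dpairAt (false, p 0) (false, p 2) (r 2) (r 0) (r 0) (r 1)
    + dpairAt (false, p 0) (true, r 0) (r 2) (r 0) (p 0) (p 2)
    + dpairAt (true, r 2) (false, p 0) (p 1) (p 0) (r 1) (r 0)
    + dpairAt (true, r 2) (true, r 1) (p 1) (p 0) (p 2) (p 0)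
    + dpairAt (true, r 2) (false, p 2) (p 1) (p 0) (r 0) (r 1)
    + dpairAt (true, r 2) (true, r 0) (p 1) (p 0) (p 0) (p 2)
    + dpairAt (false, p 1) (false, p 0) (r 0) (r 2) (r 1) (r 0)
    + dpairAt (false, p 1) (true, r 1) (r 0) (r 2) (p 2) (p 0)
    + dpairAt (false, p 1) (false, p 2) (r 0) (r 2) (r 0) (r 1)
    + dpairAt (false, p 1) (true, r 0) (r 0) (r 2) (p 0) (p 2)
    + dpairAt (true, r 0) (false, p 0) (p 0) (p 1) (r 1) (r 0)
    + dpairAt (true, r 0) (true, r 1) (p 0) (p 1) (p 2) (p 0)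
    + dpairAt (true, r 0) (false, p 2) (p 0) (p 1) (r 0) (r 1)

lemma squareProduct_mem_hasDW (p r : Equiv.Perm (Fin 3)) :
    squareProduct p r ∈ hasDW ends 2 2 := by
  unfold squareProduct
  repeat' with_reducible refine add_mem ?_ ?_
  all_goals exact dpair_mem_hasDW ends (by simp) _ _ _ _

lemma D_squareProduct (p r : Equiv.Perm (Fin 3)) :
    D ends (squareProduct p r) = st (false, p 0) r - st (true, r 0) p := by
  simp (disch := simp) only [squareProduct, dpairAt, map_add, D_dpair]
  simp only [st_eq_starCycle, starCycle, halfEdge, hAt_false_fst, hAt_true_fst, map_sub,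
    LinearMap.sub_apply]
  abel

noncomputable def starClass (v : Bool × Fin 3) (σ : Equiv.Perm (Fin 3)) :
    SC ends ⧸ bdry ends 1 2 :=
  Submodule.Quotient.mk (st v σ)

lemma starClass_false_eq_true (i j : Fin 3) (σ σ' : Equiv.Perm (Fin 3)) :
    starClass (false, i) σ = starClass (true, j) σ' := by
  obtain ⟨r, rfl, hr⟩ := exists_apply_zero_st_eq (false, i) σ j
  obtain ⟨p, rfl, hp⟩ := exists_apply_zero_st_eq (true, r 0) σ' i
  rw [starClass, starClass, ← hr, ← hp, Submodule.Quotient.eq]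
  exact ⟨squareProduct p r, squareProduct_mem_hasDW p r, D_squareProduct p r⟩

lemma starClass_eq (v v' : Bool × Fin 3) (σ σ' : Equiv.Perm (Fin 3)) :
    starClass v σ = starClass v' σ' := by
  rcases v with ⟨_ | _, i⟩ <;> rcases v' with ⟨_ | _, j⟩
  · exact (starClass_false_eq_true i 0 σ 1).trans (starClass_false_eq_true j 0 σ' 1).symm
  · exact starClass_false_eq_true i j σ σ'
  · exact (starClass_false_eq_true j i σ' σ).symm
  · exact (starClass_false_eq_true 0 i 1 σ).symm.trans (starClass_false_eq_true 0 j 1 σ')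

lemma two_smul_starClass (v : Bool × Fin 3) (σ : Equiv.Perm (Fin 3)) :
    (2 : ℤ) • starClass v σ = 0 := by
  have hswap : starClass v (σ * Equiv.swap 1 2) = -starClass v σ := by
    rw [starClass, st_mul_swap, Submodule.Quotient.mk_neg, starClass]
  calc (2 : ℤ) • starClass v σ = starClass v σ - starClass v (σ * Equiv.swap 1 2) := by
        rw [hswap, two_smul, sub_neg_eq_add]
    _ = 0 := sub_eq_zero.mpr (starClass_eq ..)

/-- Any two star classes in `H₁(B₂(K₃,₃))` are equal,
regardless of the choice of vertex, of half-edges, and of orientation: the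
difference of any two star cycles is the boundary of a degree-2, weight-2
chain of the Świątkowski complex of `K₃,₃`.  In particular every star class is
2-torsion. -/
theorem all_star_classes_equal :
    (∀ (v v' : Bool × Fin 3) (σ σ' : Equiv.Perm (Fin 3)),
      ∃ z ∈ hasDW ends 2 2, D ends z = st v σ - st v' σ') ∧
    (∀ (v : Bool × Fin 3) (σ : Equiv.Perm (Fin 3)),
      ∃ z ∈ hasDW ends 2 2, D ends z = (2 : ℤ) • st v σ) := by
  refine ⟨fun v v' σ σ' => ?_, fun v σ => ?_⟩
  · exact (Submodule.Quotient.eq _).mp (starClass_eq v v' σ σ')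
  · exact (Submodule.Quotient.mk_eq_zero _).mp (two_smul_starClass v σ)

end K33
end

section
/- For a biconnected graph Γ and a bivalent 1-cut criterion: a 1-cut of the vertex explosion Γ_w (w a bivalent vertex subdividing an edge e) that is different from the endpoints v, v' of e is also a 1-cut of Γ \ e. -/
/-! A vertex of `Γ_w` other than `u` reaches a vertex of `Γ` other than `u` without passing
through `u`: the new leaves `w`, `w'` hang off `v` and `v'`, which differ from `u`. Every edge
of `Γ ∖ e` is still an edge of `Γ_w`, so a path of `Γ ∖ e` avoiding `u` between two such
vertices would join the two components of `Γ_w` separated by `u`. -/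

namespace GraphCuts

variable {V E : Type}

/-- Adjacency in the complement of the open star of `u`: two vertices distinct
from `u` joined by an edge. -/
def adjAvoiding (ends : E → V × V) (u a b : V) : Prop :=
  a ≠ u ∧ b ≠ u ∧ ∃ e, ends e = (a, b) ∨ ends e = (b, a)

/-- `u` is a 1-cut: the complement of the open star of `u` has at least two
connected components containing vertices. -/
def IsOneCut (ends : E → V × V) (u : V) : Prop :=
  ∃ a b : V, a ≠ u ∧ b ≠ u ∧
    ¬ Relation.ReflTransGen (adjAvoiding ends u) a b

/-- Plain adjacency in the graph. -/
def adj (ends : E → V × V) (a b : V) : Prop :=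
  ∃ e, ends e = (a, b) ∨ ends e = (b, a)

section Subdivide

variable [DecidableEq E] (ends : E → V × V) (e₀ : E)

/-- The endpoint map of the explosion `Γ_w` of a bivalent vertex `w`
subdividing the edge `e₀` of `Γ`: the edge `e₀` is replaced by two tails, one
from `v = (ends e₀).1` to a new leaf `w = Sum.inr false`, and one from
`v' = (ends e₀).2` to a new leaf `w' = Sum.inr true`. -/
def endsW : E ⊕ Unit → (V ⊕ Bool) × (V ⊕ Bool) := fun x =>
  match x with
  | Sum.inl e =>
      if e = e₀ then (Sum.inl (ends e₀).1, Sum.inr false)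
      else (Sum.inl (ends e).1, Sum.inl (ends e).2)
  | Sum.inr _ => (Sum.inl (ends e₀).2, Sum.inr true)

/-- The endpoint map of `Γ_e = Γ ∖ e₀`, the graph with the open edge `e₀`
removed. -/
def endsE : {e : E // e ≠ e₀} → V × V := fun e => ends e.1

end Subdivide

open Relation

instance adjAvoiding_symm (ends : E → V × V) (u : V) : Std.Symm (adjAvoiding ends u) where
  symm _ _ := fun ⟨hx, hy, e, he⟩ => ⟨hy, hx, e, he.symm⟩

theorem IsOneCut.of_map {W F : Type} {ends : E → V × V} {ends' : F → W × W}
    (f : V → W) {u : V}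
    (hadj : ∀ x y, adjAvoiding ends u x y → adjAvoiding ends' (f u) (f x) (f y))
    (hreach : ∀ x, x ≠ f u →
      ∃ x', x' ≠ u ∧ ReflTransGen (adjAvoiding ends' (f u)) x (f x'))
    (hcut : IsOneCut ends' (f u)) : IsOneCut ends u := by
  obtain ⟨a, b, ha, hb, hab⟩ := hcut
  obtain ⟨a', ha', haa'⟩ := hreach a ha
  obtain ⟨b', hb', hbb'⟩ := hreach b hb
  refine ⟨a', b', ha', hb', fun ha'b' => hab ?_⟩
  exact haa'.trans ((ReflTransGen.lift f hadj _ _ ha'b').trans (Std.Symm.symm _ _ hbb'))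

section Explosion

variable [DecidableEq E] (ends : E → V × V) (e₀ : E)

theorem adjAvoiding_endsW_of_endsE {u x y : V} (h : adjAvoiding (endsE ends e₀) u x y) :
    adjAvoiding (endsW ends e₀) (Sum.inl u) (Sum.inl x) (Sum.inl y) := by
  obtain ⟨hx, hy, ⟨e, he⟩, hends⟩ := h
  refine ⟨Sum.inl_injective.ne hx, Sum.inl_injective.ne hy, Sum.inl e, ?_⟩
  simp only [endsE] at hends
  rcases hends with hends | hends <;> simp [endsW, he, hends]

theorem exists_reflTransGen_endsW_inl {u : V} (hu : u ≠ (ends e₀).1) (hu' : u ≠ (ends e₀).2)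
    (x : V ⊕ Bool) (hx : x ≠ Sum.inl u) :
    ∃ x' : V, x' ≠ u ∧
      ReflTransGen (adjAvoiding (endsW ends e₀) (Sum.inl u)) x (Sum.inl x') := by
  rcases x with x | _ | _
  · exact ⟨x, fun h => hx (congrArg Sum.inl h), .refl⟩
  · exact ⟨(ends e₀).1, hu.symm,
      .single ⟨hx, Sum.inl_injective.ne hu.symm, Sum.inl e₀, by simp [endsW]⟩⟩
  · exact ⟨(ends e₀).2, hu'.symm,
      .single ⟨hx, Sum.inl_injective.ne hu'.symm, Sum.inr (), by simp [endsW]⟩⟩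

end Explosion

theorem oneCut_of_explosion_is_oneCut_of_deletion_general [DecidableEq E]
    (ends : E → V × V) (e₀ : E)
    (u : V) (hu : u ≠ (ends e₀).1) (hu' : u ≠ (ends e₀).2)
    (hcut : IsOneCut (endsW ends e₀) (Sum.inl u)) :
    IsOneCut (endsE ends e₀) u :=
  IsOneCut.of_map Sum.inl (fun _ _ => adjAvoiding_endsW_of_endsE ends e₀)
    (exists_reflTransGen_endsW_inl ends e₀ hu hu') hcut

/-- Let `Γ` be a connected graph, `e₀` an edge with
distinct endpoints `v, v'`, `w` a bivalent vertex subdividing `e₀`, so that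
the explosion `Γ_w` replaces `e₀` by two tails at `v` and `v'`.  Then a 1-cut
of `Γ_w` different from `v` and `v'` is also a 1-cut of `Γ ∖ e₀`. -/
theorem oneCut_of_explosion_is_oneCut_of_deletion [DecidableEq E]
    (ends : E → V × V) (e₀ : E)
    (hvv' : (ends e₀).1 ≠ (ends e₀).2)
    (hconn : ∀ a b : V, Relation.ReflTransGen (adj ends) a b)
    (u : V) (hu : u ≠ (ends e₀).1) (hu' : u ≠ (ends e₀).2)
    (hcut : IsOneCut (endsW ends e₀) (Sum.inl u)) :
    IsOneCut (endsE ends e₀) u :=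
  oneCut_of_explosion_is_oneCut_of_deletion_general ends e₀ u hu hu' hcut

end GraphCuts
end

section
/- Cunningham–Edmonds base case characterization: a biconnected simplicial graph G with the property that every 2-cut {x,y} has some {x,y}-component whose completion is 'as complex as G' (formally: G admits no 2-cut splitting it into strictly simpler pieces) is either triconnected, a cycle, or homeomorphic to a theta graph Θ_n for some n ≥ 3. In particular: a biconnected simplicial graph that is not triconnected and not a cycle and not homeomorphic to any Θ_n admits a 2-cut {x,y} such that each {x,y}-component has strictly fewer edges than G after completion. -/
/-!
Biconnectivity gives every vertex degree at least 2, and with at most three vertices this makes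
`G` a triangle, hence a cycle; so `G` has at least four vertices. The two neighbours of a vertex
of degree 2 then form a 2-cut. Otherwise every degree is at least 3, and a pair `u, w` joined by
no three internally disjoint paths gives, by Menger's theorem applied to the neighbourhoods of
`u` and `w` in `G - u - w`, a separator of at most two vertices, which padded to two vertices is
a 2-cut; if `u` and `w` are adjacent, the separator has at most one vertex `z`, and `{u, z}` is
a 2-cut. Every 2-cut splits `G` into strictly smaller pieces, since each `{x, y}`-component
misses the at least two edges at a vertex of another component.
-/

namespace GraphDecomposition

variable {V : Type}

/-- Adjacency within a set `S` of allowed vertices. -/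
def adjIn (G : SimpleGraph V) (S : Set V) (a b : V) : Prop :=
  G.Adj a b ∧ a ∈ S ∧ b ∈ S

/-- Reachability within a set `S` of allowed vertices. -/
def reachIn (G : SimpleGraph V) (S : Set V) (a b : V) : Prop :=
  Relation.ReflTransGen (adjIn G S) a b

/-- Two walks with the same endpoints are internally disjoint. -/
def InternallyDisjoint {G : SimpleGraph V} {u w : V} (p q : G.Walk u w) : Prop :=
  ∀ x, x ∈ p.support → x ∈ q.support → x = u ∨ x = w

/-- Biconnectivity: any two distinct vertices are joined by two distinct
internally disjoint paths. -/
def Biconnected (G : SimpleGraph V) : Prop :=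
  ∀ u w : V, u ≠ w → ∃ p q : G.Walk u w, p.IsPath ∧ q.IsPath ∧ p ≠ q ∧
    InternallyDisjoint p q

/-- Triconnectivity: any two distinct vertices are joined by three pairwise
distinct, pairwise internally disjoint paths. -/
def Triconnected (G : SimpleGraph V) : Prop :=
  ∀ u w : V, u ≠ w → ∃ p q r : G.Walk u w, p.IsPath ∧ q.IsPath ∧ r.IsPath ∧
    p ≠ q ∧ p ≠ r ∧ q ≠ r ∧
    InternallyDisjoint p q ∧ InternallyDisjoint p r ∧ InternallyDisjoint q r

/-- The degree of a vertex. -/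
noncomputable def deg (G : SimpleGraph V) (v : V) : ℕ := (G.neighborSet v).ncard

/-- `G` is a cycle graph: nonempty, connected, and every vertex bivalent. -/
def IsCycleGraph (G : SimpleGraph V) : Prop :=
  Nonempty V ∧ G.Connected ∧ ∀ v, deg G v = 2

/-- `G` is homeomorphic to a theta graph `Θ_n` for some `n ≥ 3`: it is
connected with two distinct vertices of equal degree `n ≥ 3` and all other
vertices bivalent. -/
def IsThetaGraph (G : SimpleGraph V) : Prop :=
  G.Connected ∧ ∃ a b : V, a ≠ b ∧ 3 ≤ deg G a ∧ deg G a = deg G b ∧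
    ∀ v, v ≠ a → v ≠ b → deg G v = 2

open SimpleGraph

/-! ### Menger's theorem -/

def Separates (G : SimpleGraph V) (A B S : Set V) : Prop :=
  ∀ a ∈ A, ∀ b ∈ B, ∀ p : G.Walk a b, ∃ s ∈ S, s ∈ p.support

def reachableAvoiding (G : SimpleGraph V) (A S : Set V) : Set V :=
  {v | ∃ a ∈ A, ∃ p : G.Walk a v, ∀ z ∈ p.support, z ∉ S}

structure ABPath (G : SimpleGraph V) (A B : Set V) where
  start : V
  finish : V
  walk : G.Walk start finish
  isPath : walk.IsPath
  start_mem : start ∈ A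
  finish_mem : finish ∈ B

def HasDisjointPaths (G : SimpleGraph V) (A B : Set V) (k : ℕ) : Prop :=
  ∃ P : Fin k → ABPath G A B,
    Pairwise fun i j => (P i).walk.support.Disjoint (P j).walk.support

section Separation

variable {G : SimpleGraph V} {A B S : Set V}

lemma Separates.symm (h : Separates G A B S) : Separates G B A S := fun b hb a ha p => by
  simpa using h a ha b hb p.reverse

lemma reachableAvoiding_subset_compl : reachableAvoiding G A S ⊆ Sᶜ :=
  fun v ⟨_, _, p, hp⟩ => hp v p.end_mem_support

lemma reachableAvoiding_anti {T : Set V} (hST : S ⊆ T) :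
    reachableAvoiding G A T ⊆ reachableAvoiding G A S := by
  rintro v ⟨a, ha, p, hp⟩
  exact ⟨a, ha, p, fun z hz hzS => hp z hz (hST hzS)⟩

lemma mem_reachableAvoiding_of_adj {v w : V} (hv : v ∈ reachableAvoiding G A S) (hvw : G.Adj v w)
    (hw : w ∉ S) : w ∈ reachableAvoiding G A S := by
  obtain ⟨a, ha, p, hp⟩ := hv
  refine ⟨a, ha, p.concat hvw, fun z hz => ?_⟩
  rw [Walk.support_concat, List.mem_append, List.mem_singleton] at hz
  rcases hz with hz | rfl
  exacts [hp z hz, hw]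

lemma separates_iff_forall_notMem_reachableAvoiding :
    Separates G A B S ↔ ∀ b ∈ B, b ∉ reachableAvoiding G A S := by
  constructor
  · rintro h b hb ⟨a, ha, p, hp⟩
    obtain ⟨s, hs, hsp⟩ := h a ha b hb p
    exact hp s hsp hs
  · intro h a ha b hb p
    by_contra! hp
    exact h b hb ⟨a, ha, p, fun z hz hzS => hp z hzS hz⟩

lemma Separates.disjoint_reachableAvoiding (h : Separates G A B S) {v : V}
    (hA : v ∈ reachableAvoiding G A S) (hB : v ∈ reachableAvoiding G B S) : False := by
  obtain ⟨a, ha, p, hp⟩ := hA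
  obtain ⟨b, hb, q, hq⟩ := hB
  refine separates_iff_forall_notMem_reachableAvoiding.mp h b hb
    ⟨a, ha, p.append q.reverse, fun z hz => ?_⟩
  rw [Walk.mem_support_append_iff, Walk.support_reverse, List.mem_reverse] at hz
  exact hz.elim (hp z) (hq z)

end Separation

section Walks

variable {G : SimpleGraph V}

open Walk

lemma _root_.SimpleGraph.Walk.IsPath.append {u v w : V} {p : G.Walk u v} {q : G.Walk v w}
    (hp : p.IsPath) (hq : q.IsPath) (h : ∀ x ∈ p.support, x ∈ q.support → x = v) :
    (p.append q).IsPath := by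
  rw [isPath_def, support_append, List.nodup_append]
  have hq' := (isPath_def q).mp hq
  rw [← cons_tail_support, List.nodup_cons] at hq'
  refine ⟨(isPath_def p).mp hp, hq'.2, fun x hxp y hyq hxy => ?_⟩
  subst hxy
  refine hq'.1 (h x hxp ?_ ▸ hyq)
  rw [← cons_tail_support]
  exact List.mem_cons_of_mem _ hyq

lemma exists_prefix_first_mem {a b : V} (p : G.Walk a b) {A X : Set V} (ha : a ∈ A)
    (hX : ∃ v ∈ p.support, v ∈ X) :
    ∃ z ∈ X, ∃ q : G.Walk a z, q.support ⊆ p.support ∧ (p.IsPath → q.IsPath) ∧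
      ∀ v ∈ q.support, v = z ∨ v ∈ reachableAvoiding G A X := by
  induction p generalizing A with
  | nil =>
    obtain ⟨v, hv, hvX⟩ := hX
    rw [support_nil, List.mem_singleton] at hv
    subst hv
    exact ⟨_, hvX, nil, by simp, fun _ => IsPath.nil, by simp⟩
  | @cons a c b hac p ih =>
    by_cases haX : a ∈ X
    · exact ⟨a, haX, nil, by simp, fun _ => IsPath.nil, by simp⟩
    obtain ⟨z, hz, q, hqp, hpath, hreach⟩ :=
      ih (A := {c}) rfl (by simpa [haX] using hX)
    refine ⟨z, hz, cons hac q, by simpa using List.cons_subset_cons a hqp, fun hp => ?_, ?_⟩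
    · rw [cons_isPath_iff] at hp ⊢
      exact ⟨hpath hp.1, fun h => hp.2 (hqp h)⟩
    · intro v hv
      rw [support_cons, List.mem_cons] at hv
      rcases hv with rfl | hv
      · exact Or.inr ⟨v, ha, nil, by simpa using haX⟩
      refine (hreach v hv).imp_right ?_
      rintro ⟨c', rfl, r, hr⟩
      refine ⟨a, ha, cons hac r, fun z hz => ?_⟩
      rw [support_cons, List.mem_cons] at hz
      rcases hz with rfl | hz
      exacts [haX, hr z hz]

end Walks

namespace ABPath

variable {G : SimpleGraph V} {A B : Set V}

def reverse (P : ABPath G A B) : ABPath G B A :=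
  ⟨P.finish, P.start, P.walk.reverse, P.isPath.reverse, P.finish_mem, P.start_mem⟩

@[simp] lemma mem_support_reverse (P : ABPath G A B) {v : V} :
    v ∈ P.reverse.walk.support ↔ v ∈ P.walk.support := by
  simp [reverse]

def mapLe {G' : SimpleGraph V} (P : ABPath G A B) (h : G ≤ G') : ABPath G' A B :=
  ⟨P.start, P.finish, P.walk.mapLe h, P.isPath.mapLe h, P.start_mem, P.finish_mem⟩

@[simp] lemma support_mapLe {G' : SimpleGraph V} (P : ABPath G A B) (h : G ≤ G') :
    (P.mapLe h).walk.support = P.walk.support :=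
  Walk.support_mapLe_eq_support h P.walk

lemma exists_trim (P : ABPath G A B) : ∃ P' : ABPath G A B,
    P'.walk.support ⊆ P.walk.support ∧
      ∀ v ∈ P'.walk.support, v = P'.finish ∨ v ∈ reachableAvoiding G A B := by
  obtain ⟨z, hz, q, hqP, hq, hreach⟩ :=
    exists_prefix_first_mem P.walk P.start_mem ⟨P.finish, P.walk.end_mem_support, P.finish_mem⟩
  exact ⟨⟨P.start, z, q, hq P.isPath, P.start_mem, hz⟩, hqP, hreach⟩

def glue {X : Set V} (P : ABPath G A X) (Q : ABPath G B X) (h : P.finish = Q.finish)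
    (hPQ : ∀ v ∈ P.walk.support, v ∈ Q.walk.support → v = P.finish) : ABPath G A B :=
  ⟨P.start, Q.start, P.walk.append (Q.walk.reverse.copy h.symm rfl),
    P.isPath.append (by simpa using Q.isPath.reverse) (by simpa using hPQ),
    P.start_mem, Q.start_mem⟩

lemma mem_support_glue {X : Set V} {P : ABPath G A X} {Q : ABPath G B X} {h hPQ} {v : V} :
    v ∈ (P.glue Q h hPQ).walk.support ↔ v ∈ P.walk.support ∨ v ∈ Q.walk.support := by
  simp [glue, Walk.mem_support_append_iff]

end ABPath

namespace HasDisjointPaths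

variable {G : SimpleGraph V} {A B X : Set V} {k : ℕ}

lemma symm (h : HasDisjointPaths G A B k) : HasDisjointPaths G B A k := by
  obtain ⟨P, hP⟩ := h
  exact ⟨fun i => (P i).reverse,
    fun i j hij v hvi hvj => hP hij (by simpa using hvi) (by simpa using hvj)⟩

lemma mono {G' : SimpleGraph V} (h : HasDisjointPaths G A B k) (hG : G ≤ G') :
    HasDisjointPaths G' A B k := by
  obtain ⟨P, hP⟩ := h
  exact ⟨fun i => (P i).mapLe hG, fun i j hij => by simpa using hP hij⟩

lemma exists_trimmed (h : HasDisjointPaths G A B k) : ∃ P : Fin k → ABPath G A B,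
    (Pairwise fun i j => (P i).walk.support.Disjoint (P j).walk.support) ∧
      ∀ i, ∀ v ∈ (P i).walk.support, v = (P i).finish ∨ v ∈ reachableAvoiding G A B := by
  obtain ⟨P, hP⟩ := h
  choose P' hsub htrim using fun i => (P i).exists_trim
  exact ⟨P', fun i j hij => List.disjoint_of_subset_right (hsub j)
    (List.disjoint_of_subset_left (hsub i) (hP hij)), htrim⟩

lemma finish_injective {P : Fin k → ABPath G A B}
    (hP : Pairwise fun i j => (P i).walk.support.Disjoint (P j).walk.support) :
    Function.Injective fun i => (P i).finish := by
  intro i j (hij : (P i).finish = (P j).finish)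
  by_contra hne
  have hmem : (P i).finish ∈ (P j).walk.support := by
    rw [hij]
    exact (P j).walk.end_mem_support
  exact hP hne (P i).walk.end_mem_support hmem

lemma exists_finish_eq [Finite V] {P : Fin k → ABPath G A B}
    (hP : Pairwise fun i j => (P i).walk.support.Disjoint (P j).walk.support)
    (hB : B.ncard ≤ k) {b : V} (hb : b ∈ B) : ∃ i, (P i).finish = b := by
  have hrange : Set.range (fun i => (P i).finish) = B := by
    refine Set.eq_of_subset_of_ncard_le (Set.range_subset_iff.mpr fun i => (P i).finish_mem) ?_
      (Set.toFinite B)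
    rwa [Set.ncard_range_of_injective (finish_injective hP), Nat.card_fin]
  rw [← hrange] at hb
  exact hb

lemma glue [Finite V] (hX : Separates G A B X) (hXk : X.ncard ≤ k)
    (hA : HasDisjointPaths G A X k) (hB : HasDisjointPaths G X B k) :
    HasDisjointPaths G A B k := by
  obtain ⟨P, hPdisj, hPtrim⟩ := hA.exists_trimmed
  obtain ⟨Q, hQdisj, hQtrim⟩ := hB.symm.exists_trimmed
  have hmeet : ∀ i j, ∀ v ∈ (P i).walk.support, v ∈ (Q j).walk.support →
      v = (P i).finish ∧ v = (Q j).finish := by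
    intro i j v hvP hvQ
    rcases hPtrim i v hvP with hvP | hvP <;> rcases hQtrim j v hvQ with hvQ | hvQ
    · exact ⟨hvP, hvQ⟩
    · exact absurd (hvP ▸ (P i).finish_mem) (reachableAvoiding_subset_compl hvQ)
    · exact absurd (hvQ ▸ (Q j).finish_mem) (reachableAvoiding_subset_compl hvP)
    · exact (hX.disjoint_reachableAvoiding hvP hvQ).elim
  choose σ hσ using fun i => exists_finish_eq hQdisj hXk (P i).finish_mem
  have hσinj : Function.Injective σ := fun i j hij =>
    finish_injective hPdisj <| by simp only [← hσ, hij]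
  refine ⟨fun i => (P i).glue (Q (σ i)) (hσ i).symm fun v hvP hvQ =>
    (hmeet i (σ i) v hvP hvQ).1, fun i j hij v hvi hvj => ?_⟩
  simp only [ABPath.mem_support_glue] at hvi hvj
  rcases hvi with hvi | hvi <;> rcases hvj with hvj | hvj
  · exact hPdisj hij hvi hvj
  · obtain ⟨hPi, hQj⟩ := hmeet i (σ j) v hvi hvj
    exact hij (finish_injective hPdisj (hPi.symm.trans (hQj.trans (hσ j))))
  · obtain ⟨hPj, hQi⟩ := hmeet j (σ i) v hvj hvi
    exact hij (finish_injective hPdisj ((hσ i).symm.trans (hQi.symm.trans hPj)))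
  · exact hQdisj (hσinj.ne hij) hvi hvj

end HasDisjointPaths

section Menger

variable {G : SimpleGraph V} {A B S : Set V} {k : ℕ}

lemma hasDisjointPaths_of_le_ncard_inter [Finite V] (h : k ≤ (A ∩ B).ncard) :
    HasDisjointPaths G A B k := by
  let f : Fin k → ↥(A ∩ B) := fun i => (Finite.equivFin ↥(A ∩ B)).symm (Fin.castLE h i)
  have hf : Function.Injective f :=
    (Finite.equivFin _).symm.injective.comp (Fin.castLE_injective h)
  refine ⟨fun i => ⟨f i, f i, Walk.nil, Walk.IsPath.nil, (f i).2.1, (f i).2.2⟩,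
    fun i j hij => ?_⟩
  simpa [Subtype.coe_inj] using (hf.ne hij).symm

lemma Separates.insert_of_deleteEdges {x y : V} (h : Separates (G.deleteEdges {s(x, y)}) A B S) :
    Separates G A B (insert x S) := by
  intro a ha b hb p
  by_cases he : s(x, y) ∈ p.edges
  · exact ⟨x, Set.mem_insert _ _, p.fst_mem_support_of_mem_edges he⟩
  · obtain ⟨s, hs, hsp⟩ := h a ha b hb (p.toDeleteEdge _ he)
    exact ⟨s, Set.mem_insert_of_mem _ hs, by simpa using hsp⟩

lemma exists_endpoint_mem_reachableAvoiding {x y : V}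
    (hS : Separates (G.deleteEdges {s(x, y)}) A B S) (hG : ¬ Separates G A B S) :
    x ∈ reachableAvoiding (G.deleteEdges {s(x, y)}) A S ∨
      y ∈ reachableAvoiding (G.deleteEdges {s(x, y)}) A S := by
  simp only [Separates, not_forall, not_exists, not_and] at hG
  obtain ⟨a, ha, b, hb, p, hp⟩ := hG
  set R := reachableAvoiding (G.deleteEdges {s(x, y)}) A S
  have haR : a ∈ R := ⟨a, ha, Walk.nil, by simpa using fun h => hp a h p.start_mem_support⟩
  have hbR : b ∉ R := separates_iff_forall_notMem_reachableAvoiding.mp hS b hb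
  obtain ⟨d, hd, hdR, hdR'⟩ := p.exists_boundary_dart R haR hbR
  by_cases he : s(d.fst, d.snd) = s(x, y)
  · rcases Sym2.eq_iff.mp he with ⟨h, -⟩ | ⟨h, -⟩
    exacts [Or.inl (h ▸ hdR), Or.inr (h ▸ hdR)]
  · have hsnd : d.snd ∉ S := fun h => hp _ h (p.dart_snd_mem_support_of_mem_darts hd)
    exact (hdR' (mem_reachableAvoiding_of_adj hdR (deleteEdges_adj.mpr ⟨d.adj, he⟩) hsnd)).elim

lemma endpoints_mem_reachableAvoiding {x y : V}
    (hS : Separates (G.deleteEdges {s(x, y)}) A B S) (hG : ¬ Separates G A B S) :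
    (x ∈ reachableAvoiding (G.deleteEdges {s(x, y)}) A S ∧
        y ∈ reachableAvoiding (G.deleteEdges {s(x, y)}) B S) ∨
      (y ∈ reachableAvoiding (G.deleteEdges {s(x, y)}) A S ∧
        x ∈ reachableAvoiding (G.deleteEdges {s(x, y)}) B S) := by
  have hA := exists_endpoint_mem_reachableAvoiding hS hG
  have hB := exists_endpoint_mem_reachableAvoiding hS.symm fun h => hG h.symm
  have hdisj := @hS.disjoint_reachableAvoiding
  tauto

lemma Separates.of_deleteEdges_insert {x y : V} {T : Set V}
    (hS : Separates (G.deleteEdges {s(x, y)}) A B S)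
    (hy : y ∈ reachableAvoiding (G.deleteEdges {s(x, y)}) B S)
    (hT : Separates (G.deleteEdges {s(x, y)}) A (insert x S) T) : Separates G A B T := by
  intro a ha b hb p
  by_contra! hpT
  have hmeet : ∃ v ∈ p.support, v ∈ insert y (insert x S) := by
    obtain ⟨s, hs, hsp⟩ := hS.insert_of_deleteEdges a ha b hb p
    exact ⟨s, hsp, Set.mem_insert_of_mem _ hs⟩
  obtain ⟨z, hz, q, hqp, -, hq⟩ := exists_prefix_first_mem p ha hmeet
  have hqX : ∀ v ∈ q.support, v ∈ insert y (insert x S) → v = z := fun v hv hvX =>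
    (hq v hv).resolve_right fun h => reachableAvoiding_subset_compl h hvX
  -- `q` meets `{x, y}` at most in its last vertex, so it avoids the edge `xy`
  have he : s(x, y) ∉ q.edges := fun he => G.ne_of_adj (q.edges_subset_edgeSet he)
    ((hqX x (q.fst_mem_support_of_mem_edges he) (by simp)).trans
      (hqX y (q.snd_mem_support_of_mem_edges he) (by simp)).symm)
  rcases hz with rfl | hz
  · refine hS.disjoint_reachableAvoiding ⟨a, ha, q.toDeleteEdge _ he, fun v hv hvS => ?_⟩ hy
    rw [Walk.support_transfer] at hv
    rcases hq v hv with rfl | hv'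
    · exact reachableAvoiding_subset_compl hy hvS
    · exact reachableAvoiding_subset_compl hv' (by simp [hvS])
  · obtain ⟨t, ht, htq⟩ := hT a ha z hz (q.toDeleteEdge _ he)
    rw [Walk.support_transfer] at htq
    exact hpT t ht (hqp htq)

lemma ABPath.exists_concat {X Y : Set V} {x y : V} (P : ABPath G A X) (hxy : G.Adj x y)
    (hy : y ∉ P.walk.support) (hXY : X ⊆ insert x Y) (hyY : y ∈ Y) :
    ∃ P' : ABPath G A Y,
      ∀ v ∈ P'.walk.support, v ∈ P.walk.support ∨ (v = y ∧ P.finish = x) := by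
  by_cases h : P.finish = x
  · have hadj : G.Adj P.finish y := h ▸ hxy
    refine ⟨⟨P.start, y, P.walk.concat hadj, P.isPath.concat hy hadj, P.start_mem, hyY⟩,
      fun v hv => ?_⟩
    rw [Walk.support_concat, List.mem_append, List.mem_singleton] at hv
    exact hv.imp_right fun hv => ⟨hv, h⟩
  · exact ⟨⟨P.start, P.finish, P.walk, P.isPath, P.start_mem,
      (hXY P.finish_mem).resolve_left h⟩, fun v hv => Or.inl hv⟩

lemma hasDisjointPaths_of_concat {X Y : Set V} {x y : V} {P : Fin k → ABPath G A X}
    (hP : Pairwise fun i j => (P i).walk.support.Disjoint (P j).walk.support) (hxy : G.Adj x y)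
    (hy : ∀ i, y ∉ (P i).walk.support) (hXY : X ⊆ insert x Y) (hyY : y ∈ Y) :
    HasDisjointPaths G A Y k := by
  choose P' hP' using fun i => (P i).exists_concat hxy (hy i) hXY hyY
  refine ⟨P', fun i j hij v hvi hvj => ?_⟩
  rcases hP' i v hvi with hvi | ⟨rfl, hi⟩ <;> rcases hP' j v hvj with hvj | ⟨hvj, hj⟩
  · exact hP hij hvi hvj
  · exact hy i (hvj ▸ hvi)
  · exact hy j hvj
  · exact hij (HasDisjointPaths.finish_injective hP (hi.trans hj.symm))

/-- The inductive step of Göring's proof of Menger's theorem. Both `S + x` and `S + y` separate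
`A` from `B` in `G`; `k` disjoint `A`–`(S + x)` paths in `G - xy`, extended along `xy`, glue to
`k` disjoint `(S + y)`–`B` paths. -/
lemma hasDisjointPaths_of_separates_deleteEdges [Finite V] {x y : V} (hxy : G.Adj x y)
    (hk : ∀ T, Separates G A B T → k ≤ T.ncard)
    (hS : Separates (G.deleteEdges {s(x, y)}) A B S) (hSk : S.ncard < k)
    (hx : x ∈ reachableAvoiding (G.deleteEdges {s(x, y)}) A S)
    (hy : y ∈ reachableAvoiding (G.deleteEdges {s(x, y)}) B S)
    (ih : ∀ A' B' : Set V,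
      (∀ T, Separates (G.deleteEdges {s(x, y)}) A' B' T → k ≤ T.ncard) →
        HasDisjointPaths (G.deleteEdges {s(x, y)}) A' B' k) :
    HasDisjointPaths G A B k := by
  have hswap : G.deleteEdges {s(y, x)} = G.deleteEdges {s(x, y)} := by rw [Sym2.eq_swap]
  have hS' : Separates (G.deleteEdges {s(y, x)}) A B S := hswap ▸ hS
  obtain ⟨P, hPdisj, hPtrim⟩ := (ih A (insert x S) fun T hT =>
    hk T (hS.of_deleteEdges_insert hy hT)).exists_trimmed
  have hQ := ih (insert y S) B fun T hT =>
    hk T (Separates.of_deleteEdges_insert hS'.symm (hswap ▸ hx) (hswap ▸ hT.symm)).symm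
  have hyP : ∀ i, y ∉ (P i).walk.support := by
    intro i hyi
    rcases hPtrim i y hyi with hyi | hyi
    · rcases (hyi ▸ (P i).finish_mem : y ∈ insert x S) with hyx | hyS
      exacts [G.ne_of_adj hxy hyx.symm, reachableAvoiding_subset_compl hy hyS]
    · exact hS.disjoint_reachableAvoiding
        (reachableAvoiding_anti (Set.subset_insert x S) hyi) hy
  have hPG : HasDisjointPaths G A (insert y S) k :=
    hasDisjointPaths_of_concat (P := fun i => (P i).mapLe (G.deleteEdges_le _))
      (by simpa using hPdisj) hxy (by simpa using hyP) (Set.insert_subset_insert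
        (Set.subset_insert y S)) (Set.mem_insert y S)
  exact hPG.glue hS'.insert_of_deleteEdges ((Set.ncard_insert_le y S).trans hSk)
    (hQ.mono (G.deleteEdges_le _))

/-- **Menger's theorem**, by Göring's induction on the number of edges. -/
theorem hasDisjointPaths_of_forall_separates [Finite V] (G : SimpleGraph V) (A B : Set V)
    (k : ℕ) (h : ∀ S, Separates G A B S → k ≤ S.ncard) : HasDisjointPaths G A B k := by
  by_cases hE : ∃ x y, G.Adj x y
  swap
  · refine hasDisjointPaths_of_le_ncard_inter (h _ fun a ha b hb p => ?_)
    cases p with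
    | nil => exact ⟨a, ⟨ha, hb⟩, Walk.start_mem_support _⟩
    | cons hadj _ => exact (hE ⟨_, _, hadj⟩).elim
  obtain ⟨x, y, hxy⟩ := hE
  have ih : ∀ A' B' : Set V,
      (∀ T, Separates (G.deleteEdges {s(x, y)}) A' B' T → k ≤ T.ncard) →
        HasDisjointPaths (G.deleteEdges {s(x, y)}) A' B' k := fun A' B' =>
    hasDisjointPaths_of_forall_separates _ A' B' k
  by_cases hH : ∀ S, Separates (G.deleteEdges {s(x, y)}) A B S → k ≤ S.ncard
  · exact (ih A B hH).mono (G.deleteEdges_le _)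
  simp only [not_forall, not_le, exists_prop] at hH
  obtain ⟨S, hS, hSk⟩ := hH
  rcases endpoints_mem_reachableAvoiding hS fun hG => (h S hG).not_gt hSk with
    ⟨hx, hy⟩ | ⟨hy, hx⟩
  · exact hasDisjointPaths_of_separates_deleteEdges hxy h hS hSk hx hy ih
  · rw [Sym2.eq_swap] at hS hx hy ih
    exact hasDisjointPaths_of_separates_deleteEdges hxy.symm h hS hSk hy hx ih
termination_by G.edgeSet.ncard
decreasing_by
  rw [edgeSet_deleteEdges]
  exact Set.ncard_sdiff_singleton_lt_of_mem hxy

end Menger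

/-! ### Two-cuts -/

def restrict (G : SimpleGraph V) (U : Set V) : SimpleGraph V where
  Adj := adjIn G U
  symm := ⟨fun _ _ h => ⟨h.1.symm, h.2.2, h.2.1⟩⟩
  loopless := ⟨fun _ h => G.irrefl h.1⟩

def IsTwoCut (G : SimpleGraph V) (x y : V) : Prop :=
  x ≠ y ∧ ∃ a b : V, a ∉ ({x, y} : Set V) ∧ b ∉ ({x, y} : Set V) ∧
    ¬ reachIn G (Set.univ \ {x, y}) a b

def HasThreeInternallyDisjointPaths (G : SimpleGraph V) (u w : V) : Prop :=
  ∃ p q r : G.Walk u w, p.IsPath ∧ q.IsPath ∧ r.IsPath ∧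
    p ≠ q ∧ p ≠ r ∧ q ≠ r ∧
    InternallyDisjoint p q ∧ InternallyDisjoint p r ∧ InternallyDisjoint q r

section Restrict

variable {G : SimpleGraph V} {U : Set V} {a b : V}

lemma restrict_le : restrict G U ≤ G := fun _ _ h => h.1

lemma restrict_mono {U' : Set V} (h : U ⊆ U') : restrict G U ≤ restrict G U' :=
  fun _ _ hab => ⟨hab.1, h hab.2.1, h hab.2.2⟩

lemma mem_support_restrict (p : (restrict G U).Walk a b) {v : V} (hv : v ∈ p.support) :
    v = a ∨ v ∈ U := by
  induction p with
  | nil => exact Or.inl (by simpa using hv)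
  | cons h p ih =>
    rw [Walk.support_cons, List.mem_cons] at hv
    exact hv.elim Or.inl fun hv => Or.inr ((ih hv).elim (· ▸ h.2.2) id)

lemma reachIn_iff_reachable : reachIn G U a b ↔ (restrict G U).Reachable a b := by
  rw [reachable_iff_reflTransGen]
  rfl

lemma reachIn.symm (h : reachIn G U a b) : reachIn G U b a :=
  reachIn_iff_reachable.mpr (reachIn_iff_reachable.mp h).symm

lemma reachIn.mem (h : reachIn G U a b) (ha : a ∈ U) : b ∈ U := by
  induction h with
  | refl => exact ha
  | tail _ hbc _ => exact hbc.2.2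

lemma reachIn.mem_of_closed {R : Set V} (hR : ∀ v v', v ∈ R → adjIn G U v v' → v' ∈ R)
    (h : reachIn G U a b) (ha : a ∈ R) : b ∈ R := by
  induction h with
  | refl => exact ha
  | tail _ hbc ih => exact hR _ _ ih hbc

lemma Separates.not_reachIn {A B S T : Set V} (h : Separates (restrict G U) A B S)
    (hS : S ⊆ T ∪ Uᶜ) (ha : a ∈ A) (haU : a ∈ U \ T) (hb : b ∈ B) :
    ¬ reachIn G (U \ T) a b := by
  intro hab
  obtain ⟨p⟩ := reachIn_iff_reachable.mp hab
  obtain ⟨s, hsS, hsp⟩ := h a ha b hb (p.mapLe (restrict_mono Set.sdiff_subset))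
  rw [Walk.support_mapLe_eq_support] at hsp
  have hs : s ∈ U \ T := (mem_support_restrict p hsp).elim (· ▸ haU) id
  rcases hS hsS with hsT | hsU
  exacts [hs.2 hsT, hsU hs.1]

end Restrict

section TwoCut

variable {G : SimpleGraph V} {u w : V} {S T : Set V}

def nearSide (G : SimpleGraph V) (u w : V) (T : Set V) : Set V :=
  {v | ∃ a, G.Adj u a ∧ a ∈ ({u, w}ᶜ \ T : Set V) ∧ reachIn G ({u, w}ᶜ \ T) a v}

lemma nearSide_subset : nearSide G u w T ⊆ {u, w}ᶜ \ T :=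
  fun _ ⟨_, _, ha, hav⟩ => hav.mem ha

lemma not_adj_of_mem_nearSide
    (hS : Separates (restrict G {u, w}ᶜ) (G.neighborSet u \ {w}) (G.neighborSet w \ {u}) S)
    (hST : S ⊆ T ∪ {u, w}) {v : V} (hv : v ∈ nearSide G u w T) : ¬ G.Adj v w := by
  obtain ⟨a, hua, ha, hav⟩ := hv
  have hvU := nearSide_subset ⟨a, hua, ha, hav⟩
  intro hvw
  refine hS.not_reachIn (by simpa using hST) ⟨hua, fun h => ha.1 (Or.inr h)⟩ ha
    ⟨hvw.symm, fun h => hvU.1 (Or.inl h)⟩ hav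

lemma mem_nearSide_of_adj
    (hS : Separates (restrict G {u, w}ᶜ) (G.neighborSet u \ {w}) (G.neighborSet w \ {u}) S)
    (hST : S ⊆ T ∪ {u, w}) {v v' : V} (hv : v ∈ nearSide G u w T) (hvv' : G.Adj v v')
    (hv'T : v' ∉ T) (hv'u : v' ≠ u) : v' ∈ nearSide G u w T := by
  have hv'w : v' ≠ w := by
    rintro rfl
    exact not_adj_of_mem_nearSide hS hST hv hvv'
  obtain ⟨a, hua, ha, hav⟩ := hv
  exact ⟨a, hua, ha, hav.tail ⟨hvv', nearSide_subset ⟨a, hua, ha, hav⟩, by simp [*]⟩⟩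

lemma isTwoCut_of_separates_of_not_adj {x y : V} (huw : u ≠ w) (hadj : ¬ G.Adj u w)
    (hS : Separates (restrict G {u, w}ᶜ) (G.neighborSet u \ {w}) (G.neighborSet w \ {u}) S)
    (hST : S ⊆ {x, y} ∪ {u, w}) (hxy : x ≠ y) (hu : u ∉ ({x, y} : Set V))
    (hw : w ∉ ({x, y} : Set V)) : IsTwoCut G x y := by
  refine ⟨hxy, u, w, hu, hw, fun h => ?_⟩
  have hclosed : ∀ v v', v ∈ insert u (nearSide G u w {x, y}) →
      adjIn G (Set.univ \ {x, y}) v v' → v' ∈ insert u (nearSide G u w {x, y}) := by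
    rintro v v' (rfl | hv) ⟨hvv', -, hv'⟩
    · have hv'w : v' ≠ w := by rintro rfl; exact hadj hvv'
      exact Or.inr ⟨v', hvv', (by simp_all [(G.ne_of_adj hvv').symm]), .refl⟩
    · by_cases hv'u : v' = u
      · exact Or.inl hv'u
      · exact Or.inr (mem_nearSide_of_adj hS hST hv hvv' hv'.2 hv'u)
  rcases h.mem_of_closed hclosed (Set.mem_insert u _) with hwu | hw'
  · exact huw hwu.symm
  · exact (nearSide_subset hw').1 (by simp)

lemma isTwoCut_of_separates_of_subset_singleton {z a : V} (huw : u ≠ w)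
    (hS : Separates (restrict G {u, w}ᶜ) (G.neighborSet u \ {w}) (G.neighborSet w \ {u}) S)
    (hST : S ⊆ {z} ∪ {u, w}) (hz : z ∉ ({u, w} : Set V)) (hua : G.Adj u a) (haw : a ≠ w)
    (haz : a ≠ z) : IsTwoCut G u z := by
  have hzu : u ≠ z := fun h => hz (by simp [h])
  have hau : a ≠ u := (G.ne_of_adj hua).symm
  refine ⟨hzu, a, w, by simp [hau, haz], by simp_all [eq_comm], fun h => ?_⟩
  have hclosed : ∀ v v', v ∈ nearSide G u w {z} → adjIn G (Set.univ \ {u, z}) v v' →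
      v' ∈ nearSide G u w {z} := fun v v' hv ⟨hvv', _, hv'⟩ =>
    mem_nearSide_of_adj hS hST hv hvv' (by simp_all) (by simp_all)
  have ha : a ∈ nearSide G u w {z} := ⟨a, hua, (by simp [hau, haw, haz]), .refl⟩
  exact (nearSide_subset (h.mem_of_closed hclosed ha)).1 (by simp)

end TwoCut

section ThreePaths

variable {G : SimpleGraph V} {u w : V}

lemma InternallyDisjoint.ne {p q : G.Walk u w} (h : InternallyDisjoint p q) {v : V}
    (hv : v ∈ p.support) (hvu : v ≠ u) (hvw : v ≠ w) : p ≠ q := by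
  rintro rfl
  exact (h v hv hv).elim hvu hvw

lemma ABPath.exists_walk (huw : u ≠ w)
    (P : ABPath (restrict G {u, w}ᶜ) (G.neighborSet u \ {w}) (G.neighborSet w \ {u})) :
    ∃ q : G.Walk u w, q.IsPath ∧ P.start ∈ q.support ∧
      ∀ v ∈ q.support, v = u ∨ v = w ∨ v ∈ P.walk.support := by
  have hstart : P.start ∈ ({u, w}ᶜ : Set V) := by
    rintro (h | h)
    exacts [G.ne_of_adj (P.start_mem.1 : G.Adj u P.start) h.symm, P.start_mem.2 h]
  have hP : ∀ v ∈ P.walk.support, v ∉ ({u, w} : Set V) := fun v hv =>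
    (mem_support_restrict P.walk hv).elim (· ▸ hstart) id
  have hu : G.Adj u P.start := P.start_mem.1
  have hw : G.Adj P.finish w := P.finish_mem.1.symm
  refine ⟨Walk.cons hu ((P.walk.mapLe restrict_le).concat hw), ?_, ?_, fun v hv => ?_⟩
  · rw [Walk.cons_isPath_iff, Walk.support_concat, Walk.support_mapLe_eq_support]
    refine ⟨(P.isPath.mapLe restrict_le).concat (by simpa using fun h => hP w h) _, ?_⟩
    simpa [huw] using fun h => hP u h
  · simp [Walk.support_concat]
  · simp only [Walk.support_cons, Walk.support_concat, Walk.support_mapLe_eq_support,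
      List.mem_cons, List.mem_append] at hv
    tauto

lemma exists_internallyDisjoint_walks {k : ℕ} (huw : u ≠ w)
    (h : HasDisjointPaths (restrict G {u, w}ᶜ) (G.neighborSet u \ {w}) (G.neighborSet w \ {u})
      k) :
    ∃ p : Fin k → G.Walk u w,
      (∀ i, (p i).IsPath ∧ ∃ v ∈ (p i).support, v ≠ u ∧ v ≠ w) ∧
      Pairwise fun i j => p i ≠ p j ∧ InternallyDisjoint (p i) (p j) := by
  obtain ⟨P, hP⟩ := h
  choose p hpath hstart hsupp using fun i => (P i).exists_walk huw
  have hint : ∀ i, (P i).start ≠ u ∧ (P i).start ≠ w := fun i =>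
    ⟨(G.ne_of_adj (P i).start_mem.1).symm, (P i).start_mem.2⟩
  have hdisj : Pairwise fun i j => InternallyDisjoint (p i) (p j) := by
    intro i j hij v hvi hvj
    rcases hsupp i v hvi with h | h | hvi
    · exact Or.inl h
    · exact Or.inr h
    rcases hsupp j v hvj with h | h | hvj
    · exact Or.inl h
    · exact Or.inr h
    exact (hP hij hvi hvj).elim
  exact ⟨p, fun i => ⟨hpath i, _, hstart i, hint i⟩,
    fun i j hij => ⟨(hdisj hij).ne (hstart i) (hint i).1 (hint i).2, hdisj hij⟩⟩

lemma hasThreeInternallyDisjointPaths_of_hasDisjointPaths (huw : u ≠ w)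
    (h : HasDisjointPaths (restrict G {u, w}ᶜ) (G.neighborSet u \ {w}) (G.neighborSet w \ {u})
      3) :
    HasThreeInternallyDisjointPaths G u w := by
  obtain ⟨p, hp, hdisj⟩ := exists_internallyDisjoint_walks huw h
  exact ⟨p 0, p 1, p 2, (hp 0).1, (hp 1).1, (hp 2).1, (hdisj (by decide)).1,
    (hdisj (by decide)).1, (hdisj (by decide)).1, (hdisj (by decide)).2, (hdisj (by decide)).2,
    (hdisj (by decide)).2⟩

lemma hasThreeInternallyDisjointPaths_of_adj (hadj : G.Adj u w)
    (h : HasDisjointPaths (restrict G {u, w}ᶜ) (G.neighborSet u \ {w}) (G.neighborSet w \ {u})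
      2) :
    HasThreeInternallyDisjointPaths G u w := by
  obtain ⟨p, hp, hdisj⟩ := exists_internallyDisjoint_walks (G.ne_of_adj hadj) h
  let e : G.Walk u w := Walk.cons hadj Walk.nil
  have he : ∀ i, InternallyDisjoint (p i) e := fun i v _ hv => by simpa [e] using hv
  have hne : ∀ i, p i ≠ e := fun i => by
    obtain ⟨v, hv, hvu, hvw⟩ := (hp i).2
    exact (he i).ne hv hvu hvw
  exact ⟨p 0, p 1, e, (hp 0).1, (hp 1).1, by simp [e, G.ne_of_adj hadj], (hdisj (by decide)).1,
    hne 0, hne 1, (hdisj (by decide)).2, he 0, he 1⟩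

end ThreePaths

section Biconnected

variable {G : SimpleGraph V}

lemma deg_lt_card [Finite V] (v : V) : deg G v < Nat.card V := by
  rw [deg, ← Set.ncard_univ]
  exact Set.ncard_lt_ncard (Set.ssubset_univ_iff.mpr fun h => G.notMem_neighborSet_self
    (h ▸ Set.mem_univ v))

lemma Biconnected.preconnected (hbi : Biconnected G) : G.Preconnected := fun u w => by
  by_cases huw : u = w
  · exact huw ▸ Reachable.refl u
  · obtain ⟨p, -⟩ := hbi u w huw
    exact p.reachable

lemma Biconnected.exists_adj_adj (hbi : Biconnected G) {v w : V} (hvw : v ≠ w) :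
    ∃ c d, c ≠ d ∧ G.Adj v c ∧ G.Adj v d := by
  obtain ⟨p, q, hp, hq, hpq, hdisj⟩ := hbi v w hvw
  cases p with
  | nil => exact (hvw rfl).elim
  | @cons _ c _ hc p =>
  cases q with
  | nil => exact (hvw rfl).elim
  | @cons _ d _ hd q =>
  refine ⟨c, d, ?_, hc, hd⟩
  rintro rfl
  rcases hdisj c (by simp) (by simp) with hcv | rfl
  · exact G.ne_of_adj hc hcv.symm
  -- two paths whose second vertex is `w` are both the edge `vw`
  rw [Walk.cons_isPath_iff, Walk.isPath_iff_nil] at hp hq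
  exact hpq (by rw [hp.1.eq_nil, hq.1.eq_nil])

lemma Biconnected.two_le_deg [Finite V] (hbi : Biconnected G) {v w : V} (hvw : v ≠ w) :
    2 ≤ deg G v := by
  obtain ⟨c, d, hcd, hc, hd⟩ := hbi.exists_adj_adj hvw
  rw [deg, ← Set.ncard_pair hcd]
  exact Set.ncard_le_ncard (Set.pair_subset hc hd)

end Biconnected

section Cuts

variable {G : SimpleGraph V}

lemma exists_separates_of_not_hasDisjointPaths [Finite V] {A B : Set V} {k : ℕ}
    (h : ¬ HasDisjointPaths G A B k) : ∃ S, Separates G A B S ∧ S.ncard < k := by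
  by_contra! h'
  exact h (hasDisjointPaths_of_forall_separates G A B k h')

lemma exists_subset_union_ncard_eq [Finite V] {S W : Set V} {m : ℕ} (hS : S.ncard ≤ m)
    (hm : m ≤ Wᶜ.ncard) : ∃ T ⊆ Wᶜ, S ⊆ T ∪ W ∧ T.ncard = m := by
  obtain ⟨T, hST, hTW, hT⟩ := Set.exists_subsuperset_card_eq (s := S \ W) (fun _ hv => hv.2)
    ((Set.ncard_le_ncard Set.sdiff_subset).trans hS) hm
  refine ⟨T, hTW, fun v hv => ?_, hT⟩
  by_cases hvW : v ∈ W
  exacts [Or.inr hvW, Or.inl (hST ⟨hv, hvW⟩)]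

lemma exists_isTwoCut_of_deg_eq_two [Finite V] (hV : 4 ≤ Nat.card V) {v : V}
    (hv : deg G v = 2) : ∃ x y, IsTwoCut G x y := by
  obtain ⟨x, y, hxy, hN⟩ := Set.ncard_eq_two.mp hv
  have hcard : ({v, x, y} : Set V).ncard < (Set.univ : Set V).ncard := by
    have := Set.ncard_insert_le v {x, y}
    rw [Set.ncard_pair hxy] at this
    rw [Set.ncard_univ]
    omega
  obtain ⟨b, -, hb⟩ := Set.exists_mem_notMem_of_ncard_lt_ncard hcard
  have hvN : v ∉ ({x, y} : Set V) := hN ▸ G.notMem_neighborSet_self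
  refine ⟨x, y, hxy, v, b, hvN, fun h => hb (Or.inr h), fun h => hb (Or.inl ?_)⟩
  refine h.mem_of_closed (R := {v}) ?_ rfl
  rintro _ v' rfl ⟨hvv', -, hv'⟩
  exact (hv'.2 (hN ▸ hvv')).elim

lemma exists_isTwoCut_of_not_hasThreeInternallyDisjointPaths [Finite V] {u w : V}
    (hV : 4 ≤ Nat.card V) (hu : 3 ≤ deg G u) (huw : u ≠ w)
    (h : ¬ HasThreeInternallyDisjointPaths G u w) : ∃ x y, IsTwoCut G x y := by
  have hcompl : 2 ≤ ({u, w}ᶜ : Set V).ncard := by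
    have := Set.ncard_add_ncard_compl ({u, w} : Set V)
    rw [Set.ncard_pair huw] at this
    omega
  by_cases hadj : G.Adj u w
  · obtain ⟨S, hS, hS1⟩ := exists_separates_of_not_hasDisjointPaths fun hP =>
      h (hasThreeInternallyDisjointPaths_of_adj hadj hP)
    obtain ⟨T, hTU, hST, hT⟩ := exists_subset_union_ncard_eq (S := S) (W := {u, w}) (m := 1)
      (by omega) (by omega)
    obtain ⟨z, rfl⟩ := Set.ncard_eq_one.mp hT
    have hwz : ({w, z} : Set V).ncard < (G.neighborSet u).ncard :=
      (Set.ncard_insert_le w {z}).trans_lt (by rw [Set.ncard_singleton]; exact hu)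
    obtain ⟨a, hua, ha⟩ := Set.exists_mem_notMem_of_ncard_lt_ncard hwz
    exact ⟨u, z, isTwoCut_of_separates_of_subset_singleton huw hS hST (hTU rfl) hua
      (fun h => ha (Or.inl h)) (fun h => ha (Or.inr h))⟩
  · obtain ⟨S, hS, hS2⟩ := exists_separates_of_not_hasDisjointPaths fun hP =>
      h (hasThreeInternallyDisjointPaths_of_hasDisjointPaths huw hP)
    obtain ⟨T, hTU, hST, hT⟩ := exists_subset_union_ncard_eq (S := S) (W := {u, w}) (m := 2)
      (by omega) hcompl
    obtain ⟨x, y, hxy, rfl⟩ := Set.ncard_eq_two.mp hT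
    exact ⟨x, y, isTwoCut_of_separates_of_not_adj huw hadj hS hST hxy
      (fun h => hTU h (by simp)) (fun h => hTU h (by simp))⟩

lemma Biconnected.exists_isTwoCut [Finite V] (hbi : Biconnected G) (htri : ¬ Triconnected G)
    (hcyc : ¬ IsCycleGraph G) : ∃ x y, IsTwoCut G x y := by
  obtain ⟨u, w, huw, h3⟩ : ∃ u w, u ≠ w ∧ ¬ HasThreeInternallyDisjointPaths G u w := by
    by_contra! h
    exact htri h
  have hdeg : ∀ v, 2 ≤ deg G v := fun v => by
    by_cases hvu : v = u
    exacts [hbi.two_le_deg (hvu ▸ huw), hbi.two_le_deg hvu]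
  have hV : 4 ≤ Nat.card V := by
    by_contra! hV
    have : Nonempty V := ⟨u⟩
    exact hcyc ⟨⟨u⟩, ⟨hbi.preconnected⟩, fun v => by
      have := hdeg v
      have := deg_lt_card (G := G) v
      omega⟩
  by_cases h2 : ∃ v, deg G v = 2
  · obtain ⟨v, hv⟩ := h2
    exact exists_isTwoCut_of_deg_eq_two hV hv
  · have h2u : deg G u ≠ 2 := fun h => h2 ⟨u, h⟩
    exact exists_isTwoCut_of_not_hasThreeInternallyDisjointPaths hV
      (by have := hdeg u; omega) huw h3

lemma IsTwoCut.ncard_add_one_lt [Finite V] (hbi : Biconnected G) {x y : V} (h : IsTwoCut G x y)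
    {a : V} (ha : a ∉ ({x, y} : Set V)) :
    ({e ∈ G.edgeSet | ∃ w, w ∈ e ∧ reachIn G (Set.univ \ {x, y}) a w}).ncard + 1
      < G.edgeSet.ncard := by
  set U : Set V := Set.univ \ {x, y}
  have haU : a ∈ U := ⟨trivial, ha⟩
  obtain ⟨d, hdU, hd⟩ : ∃ d ∈ U, ¬ reachIn G U a d := by
    obtain ⟨-, b, c, hb, hc, hbc⟩ := h
    by_cases hab : reachIn G U a b
    · exact ⟨c, ⟨trivial, hc⟩, fun hac => hbc (hab.symm.trans hac)⟩
    · exact ⟨b, ⟨trivial, hb⟩, hab⟩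
  set C := {e ∈ G.edgeSet | ∃ w, w ∈ e ∧ reachIn G U a w}
  have hdisj : Disjoint C (G.incidenceSet d) := by
    rw [Set.disjoint_left]
    rintro e ⟨he, w, hwe, haw⟩ ⟨-, hde⟩
    induction e using Sym2.ind with | _ p q => ?_
    rcases Sym2.mem_iff.mp hde with rfl | rfl <;> rcases Sym2.mem_iff.mp hwe with rfl | rfl
    · exact hd haw
    · exact hd (haw.tail ⟨he.symm, haw.mem haU, hdU⟩)
    · exact hd (haw.tail ⟨he, haw.mem haU, hdU⟩)
    · exact hd haw
  have hinc : (G.incidenceSet d).ncard = deg G d := by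
    classical exact Set.ncard_congr' (G.incidenceSetEquivNeighborSet d)
  have hsub : (C ∪ G.incidenceSet d).ncard ≤ G.edgeSet.ncard :=
    Set.ncard_le_ncard (Set.union_subset (Set.sep_subset _ _) (G.incidenceSet_subset d))
  rw [Set.ncard_union_eq hdisj, hinc] at hsub
  have := hbi.two_le_deg (w := x) fun h => hdU.2 (Or.inl h)
  omega

end Cuts

theorem exists_splitting_two_cut_general
    [Fintype V] (G : SimpleGraph V)
    (hbi : Biconnected G) (htri : ¬ Triconnected G)
    (hcyc : ¬ IsCycleGraph G) :
    ∃ x y : V, x ≠ y ∧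
      -- `{x, y}` is a 2-cut
      (∃ a b : V, a ∉ ({x, y} : Set V) ∧ b ∉ ({x, y} : Set V) ∧
        ¬ reachIn G (Set.univ \ {x, y}) a b) ∧
      -- each completed `{x, y}`-component is strictly smaller than `G`
      ∀ a : V, a ∉ ({x, y} : Set V) →
        ({e ∈ G.edgeSet | ∃ w, w ∈ e ∧
            reachIn G (Set.univ \ {x, y}) a w}).ncard + 1
          < G.edgeSet.ncard := by
  obtain ⟨x, y, hcut⟩ := hbi.exists_isTwoCut htri hcyc
  exact ⟨x, y, hcut.1, hcut.2, fun a ha => hcut.ncard_add_one_lt hbi ha⟩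

/-- **Cunningham–Edmonds base case.**  A biconnected simplicial
graph which is not triconnected, not a cycle, and not homeomorphic to any theta
graph `Θ_n` admits a 2-cut `{x, y}` such that each `{x, y}`-component has
strictly fewer edges than `G` after completion (adding an edge `e_{xy}`). -/
theorem exists_splitting_two_cut
    [Fintype V] (G : SimpleGraph V)
    (hbi : Biconnected G) (htri : ¬ Triconnected G)
    (hcyc : ¬ IsCycleGraph G) (htheta : ¬ IsThetaGraph G) :
    ∃ x y : V, x ≠ y ∧
      -- `{x, y}` is a 2-cut
      (∃ a b : V, a ∉ ({x, y} : Set V) ∧ b ∉ ({x, y} : Set V) ∧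
        ¬ reachIn G (Set.univ \ {x, y}) a b) ∧
      -- each completed `{x, y}`-component is strictly smaller than `G`
      ∀ a : V, a ∉ ({x, y} : Set V) →
        ({e ∈ G.edgeSet | ∃ w, w ∈ e ∧
            reachIn G (Set.univ \ {x, y}) a w}).ncard + 1
          < G.edgeSet.ncard :=
  exists_splitting_two_cut_general G hbi htri hcyc

end GraphDecomposition
end

section
/- If a connected simplicial graph Γ has minimal simplicial model with at least one 1-cut, then there exists a 1-cut x such that every x-component of Γ has strictly fewer 1-cuts (in its own minimal simplicial model) than Γ does; and Γ has no 1-cuts if and only if Γ is biconnected, a single vertex, or a single edge. -/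
/-!
In (1) every 1-cut `x` works: a path between two vertices of an `{x}`-component can leave the
component only through `x`, so every 1-cut of the component is a 1-cut of `Γ`, while `x` does not
disconnect its own component.

For (2), a connected graph without cut vertices on at least three vertices is biconnected by
Whitney's argument. If `Γ` has a cut vertex `y` but no 1-cut, then `y` has valence two and is a
leaf of each `{y}`-component, which has no 1-cut either. Peeling off leaves one at a time, a
connected graph with a leaf and no 1-cut is a path: the neighbour of the leaf has valence at most
two, since otherwise it would be a 1-cut. Hence every vertex of `Γ` has valence at most two and
`Γ` has a leaf.
-/

namespace GraphOneCuts

variable {V : Type}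

/-- Adjacency within a set `S` of allowed vertices. -/
def adjIn (G : SimpleGraph V) (S : Set V) (a b : V) : Prop :=
  G.Adj a b ∧ a ∈ S ∧ b ∈ S

/-- Reachability within a set `S` of allowed vertices. -/
def reachIn (G : SimpleGraph V) (S : Set V) (a b : V) : Prop :=
  Relation.ReflTransGen (adjIn G S) a b

/-- `x` is a cut vertex of the induced subgraph on `S`. -/
def cutIn (G : SimpleGraph V) (S : Set V) (x : V) : Prop :=
  x ∈ S ∧ ∃ a b : V, a ∈ S \ {x} ∧ b ∈ S \ {x} ∧ ¬ reachIn G (S \ {x}) a b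

/-- The 1-cuts of the minimal simplicial model of the induced subgraph on `S`:
its essential (valence ≥ 3) cut vertices.  (Bivalent vertices are smoothed in
the minimal simplicial model, so they contribute no 1-cuts.) -/
def oneCutsIn (G : SimpleGraph V) (S : Set V) : Set V :=
  {x | cutIn G S x ∧ 3 ≤ (G.neighborSet x ∩ S).ncard}

/-- The `{x}`-component of `G` containing `a`: the closure of the connected
component of `G ∖ x` containing `a`. -/
def componentOf (G : SimpleGraph V) (x a : V) : Set V :=
  {w | reachIn G (Set.univ \ {x}) a w} ∪ {x}

/-- Two walks with the same endpoints are internally disjoint. -/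
def InternallyDisjoint {G : SimpleGraph V} {u w : V} (p q : G.Walk u w) : Prop :=
  ∀ y, y ∈ p.support → y ∈ q.support → y = u ∨ y = w

/-- Biconnectivity: any two distinct vertices are joined by two distinct
internally disjoint paths. -/
def Biconnected (G : SimpleGraph V) : Prop :=
  ∀ u w : V, u ≠ w → ∃ p q : G.Walk u w, p.IsPath ∧ q.IsPath ∧ p ≠ q ∧
    InternallyDisjoint p q

/-- `G` is homeomorphic to the single-edge graph `K₁,₁`, i.e. is a path graph
on at least two vertices: connected, all degrees at most 2, and some vertex of
degree 1. -/
def IsPathGraph (G : SimpleGraph V) : Prop :=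
  G.Connected ∧ (∀ v, (G.neighborSet v).ncard ≤ 2) ∧
    ∃ v, (G.neighborSet v).ncard = 1

variable {G : SimpleGraph V} {S T : Set V} {a b c d u v w x y z : V}

namespace reachIn

lemma mono (hST : S ⊆ T) (h : reachIn G S a b) : reachIn G T a b :=
  Relation.ReflTransGen.mono (fun _ _ h ↦ ⟨h.1, hST h.2.1, hST h.2.2⟩) _ _ h

lemma symm (h : reachIn G S a b) : reachIn G S b a := by
  induction h with
  | refl => exact .refl
  | tail _ step ih => exact .head ⟨step.1.symm, step.2.2, step.2.1⟩ ih

lemma trans (h : reachIn G S a b) (h' : reachIn G S b c) : reachIn G S a c :=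
  Relation.ReflTransGen.trans h h'

lemma mem_left (h : reachIn G S a b) (hab : a ≠ b) : a ∈ S := by
  obtain rfl | ⟨_, hstep, _⟩ := Relation.ReflTransGen.cases_head h
  exacts [absurd rfl hab, hstep.2.1]

lemma mem_right (h : reachIn G S a b) (hab : a ≠ b) : b ∈ S :=
  h.symm.mem_left hab.symm

lemma exists_walk (h : reachIn G S a b) (ha : a ∈ S) :
    ∃ W : G.Walk a b, ∀ v ∈ W.support, v ∈ S := by
  induction h with
  | refl => exact ⟨.nil, by simpa using ha⟩
  | tail _ step ih =>
    obtain ⟨W, hW⟩ := ih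
    refine ⟨W.concat step.1, fun v hv ↦ ?_⟩
    rw [SimpleGraph.Walk.support_concat, List.mem_append, List.mem_singleton] at hv
    exact hv.elim (hW v) fun hv ↦ hv ▸ step.2.2

end reachIn

lemma reachIn_of_walk (W : G.Walk a b) (hW : ∀ v ∈ W.support, v ∈ S) : reachIn G S a b := by
  induction W with
  | nil => exact .refl
  | cons h p ih =>
    exact .head ⟨h, hW _ (by simp), hW _ (by simp)⟩ (ih fun v hv ↦ hW v (by simp [hv]))

lemma reachIn_of_not_cutIn (h : ¬ cutIn G Set.univ y) (ha : a ≠ y) (hb : b ≠ y) :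
    reachIn G (Set.univ \ {y}) a b := by
  by_contra hab
  exact h ⟨trivial, a, b, ⟨trivial, ha⟩, ⟨trivial, hb⟩, hab⟩

lemma exists_adj_reachIn (hconn : G.Connected) (ha : a ≠ x) :
    ∃ u, G.Adj x u ∧ reachIn G (Set.univ \ {x}) a u := by
  have hax := (SimpleGraph.reachable_iff_reflTransGen a x).mp (hconn a x)
  induction hax using Relation.ReflTransGen.head_induction_on with
  | refl => exact absurd rfl ha
  | @head a' b' hstep _ ih =>
    by_cases hbx : b' = x
    · exact ⟨a', hbx ▸ hstep.symm, .refl⟩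
    · obtain ⟨u, hxu, hb'u⟩ := ih hbx
      exact ⟨u, hxu, .head ⟨hstep, ⟨trivial, ha⟩, ⟨trivial, hbx⟩⟩ hb'u⟩

lemma reachIn_diff_singleton_of_unique_adj (hb : ∀ z ∈ S, G.Adj a z → z = b)
    (hc : c ≠ a) (hd : d ≠ a) (h : reachIn G S c d) : reachIn G (S \ {a}) c d := by
  -- a walk within `S` can only enter and leave `a` through `b`
  suffices ∀ w, reachIn G S c w →
      (w ≠ a ∧ reachIn G (S \ {a}) c w) ∨ (w = a ∧ reachIn G (S \ {a}) c b) from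
    ((this d h).resolve_right fun h ↦ hd h.1).2
  intro w hw
  induction hw with
  | refl => exact .inl ⟨hc, .refl⟩
  | @tail w w' _ step ih =>
    obtain ⟨hadj, hwS, hw'S⟩ := step
    rcases ih with ⟨hwa, hcw⟩ | ⟨rfl, hcb⟩
    · by_cases hw'a : w' = a
      · subst hw'a
        exact .inr ⟨rfl, hb w hwS hadj.symm ▸ hcw⟩
      · exact .inl ⟨hw'a, hcw.tail ⟨hadj, ⟨hwS, hwa⟩, ⟨hw'S, hw'a⟩⟩⟩
    · obtain rfl := hb w' hw'S hadj
      exact .inl ⟨hadj.ne', hcb⟩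

lemma reachIn_setOf_reachIn (h : reachIn G T a c) (h' : reachIn G T c d) :
    reachIn G ({w | reachIn G T a w} ∩ T) c d := by
  induction h' with
  | refl => exact .refl
  | tail hcw step ih =>
    exact ih.tail ⟨step.1, ⟨h.trans hcw, step.2.1⟩, ⟨(h.trans hcw).tail step, step.2.2⟩⟩

lemma right_mem_componentOf : a ∈ componentOf G x a := Or.inl .refl

lemma left_mem_componentOf : x ∈ componentOf G x a := Or.inr rfl

lemma eq_of_adj_of_mem_componentOf (hw : w ∈ componentOf G x a) (hadj : G.Adj w z)
    (hz : z ∉ componentOf G x a) : w = x := by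
  by_contra hwx
  have hzx : z ≠ x := fun h ↦ hz (h ▸ left_mem_componentOf)
  exact hz (Or.inl ((hw.resolve_right hwx).tail ⟨hadj, ⟨trivial, hwx⟩, ⟨trivial, hzx⟩⟩))

lemma neighborSet_inter_componentOf (hw : w ∈ componentOf G x a) (hwx : w ≠ x) :
    G.neighborSet w ∩ componentOf G x a = G.neighborSet w :=
  Set.inter_eq_left.mpr fun _ hadj ↦ by_contra fun hz ↦
    hwx (eq_of_adj_of_mem_componentOf hw hadj hz)

lemma reachIn_inter_componentOf (hc : c ∈ componentOf G x a) (hd : d ∈ componentOf G x a)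
    (h : reachIn G T c d) : reachIn G (componentOf G x a ∩ T) c d := by
  have key : ∀ s ∈ componentOf G x a, ∀ t, reachIn G T s t →
      reachIn G (componentOf G x a ∩ T) s t ∨ reachIn G (componentOf G x a ∩ T) s x := by
    intro s hs t hst
    induction hst with
    | refl => exact .inl .refl
    | @tail w w' _ step ih =>
      refine ih.elim (fun hsw ↦ ?_) .inr
      have hw : w ∈ componentOf G x a := by
        by_cases hsw' : s = w
        · exact hsw' ▸ hs
        · exact (hsw.mem_right hsw').1
      by_cases hw' : w' ∈ componentOf G x a
      · exact .inl (hsw.tail ⟨step.1, ⟨hw, step.2.1⟩, ⟨hw', step.2.2⟩⟩)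
      · exact .inr (eq_of_adj_of_mem_componentOf hw step.1 hw' ▸ hsw)
  rcases key c hc d h with hcd | hcx
  · exact hcd
  rcases key d hd c h.symm with hdc | hdx
  exacts [hdc.symm, hcx.trans hdx.symm]

lemma cutIn_univ_of_cutIn_componentOf (h : cutIn G (componentOf G x a) y) :
    cutIn G Set.univ y := by
  obtain ⟨-, c, d, ⟨hc, hcy⟩, ⟨hd, hdy⟩, hcd⟩ := h
  refine ⟨trivial, c, d, ⟨trivial, hcy⟩, ⟨trivial, hdy⟩, fun h ↦ hcd ?_⟩
  exact (reachIn_inter_componentOf hc hd h).mono fun s hs ↦ ⟨hs.1, hs.2.2⟩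

lemma not_cutIn_componentOf_left : ¬ cutIn G (componentOf G x a) x := by
  rintro ⟨-, c, d, ⟨hc, hcx⟩, ⟨hd, hdx⟩, hcd⟩
  have hc' : reachIn G (Set.univ \ {x}) a c := hc.resolve_right hcx
  have hd' : reachIn G (Set.univ \ {x}) a d := hd.resolve_right hdx
  exact hcd ((reachIn_setOf_reachIn hc' (hc'.symm.trans hd')).mono fun s hs ↦
    ⟨Or.inl hs.1, hs.2.2⟩)

lemma oneCutsIn_componentOf_subset [Finite V] :
    oneCutsIn G (componentOf G x a) ⊆ oneCutsIn G Set.univ \ {x} := by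
  rintro y ⟨hcut, hdeg⟩
  refine ⟨⟨cutIn_univ_of_cutIn_componentOf hcut, hdeg.trans (Set.ncard_le_ncard
    (Set.inter_subset_inter_right _ (Set.subset_univ _)))⟩, ?_⟩
  rintro rfl
  exact not_cutIn_componentOf_left hcut

lemma reachIn_componentOf (hconn : G.Connected) (ha : a ≠ x) (hc : c ∈ componentOf G x a)
    (hd : d ∈ componentOf G x a) : reachIn G (componentOf G x a) c d := by
  have hx : ∀ c ∈ componentOf G x a, reachIn G (componentOf G x a) x c := by
    rintro c (hc | rfl)
    · obtain ⟨u, hxu, hau⟩ := exists_adj_reachIn hconn ha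
      refine .head ⟨hxu, left_mem_componentOf, Or.inl hau⟩ ?_
      exact (reachIn_setOf_reachIn hau (hau.symm.trans hc)).mono fun s hs ↦ Or.inl hs.1
    · exact .refl
  exact (hx c hc).symm.trans (hx d hd)

lemma neighborSet_inter_diff_singleton (h : ¬ G.Adj v a) :
    G.neighborSet v ∩ (S \ {a}) = G.neighborSet v ∩ S := by
  rw [← Set.inter_sdiff_assoc, Set.sdiff_singleton_eq_self fun h' ↦ h h'.1]

lemma cutIn_of_unique_adj (ha : a ∈ S) (hab : G.Adj a b) (hb : b ∈ S)
    (huniq : ∀ z ∈ S, G.Adj a z → z = b) (hc : c ∈ S) (hca : c ≠ a) (hcb : c ≠ b) :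
    cutIn G S b := by
  refine ⟨hb, a, c, ⟨ha, hab.ne⟩, ⟨hc, hcb⟩, fun h ↦ ?_⟩
  obtain rfl | ⟨z, hz, -⟩ := Relation.ReflTransGen.cases_head h
  · exact hca rfl
  · exact hz.2.2.2 (huniq z hz.2.2.1 hz.1)

lemma eq_or_eq_of_unique_adj (hS : ∀ c ∈ S, ∀ d ∈ S, reachIn G S c d) (ha : a ∈ S)
    (hab : ∀ z ∈ S, G.Adj a z → z = b) (hba : ∀ z ∈ S, G.Adj b z → z = a)
    (hv : v ∈ S) : v = a ∨ v = b := by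
  have hav := hS a ha v hv
  clear hv
  induction hav with
  | refl => exact .inl rfl
  | tail _ step ih =>
    rcases ih with rfl | rfl
    exacts [.inr (hab _ step.2.2 step.1), .inl (hba _ step.2.2 step.1)]

lemma oneCutsIn_diff_singleton_subset (huniq : ∀ z ∈ S, G.Adj a z → z = b) :
    oneCutsIn G (S \ {a}) ⊆ oneCutsIn G S ∪ {b} := by
  rintro z ⟨⟨hz, c, d, ⟨hc, hcz⟩, ⟨hd, hdz⟩, hcd⟩, hdeg⟩
  by_cases hzb : z = b
  · exact .inr hzb
  have hza : ¬ G.Adj z a := fun h ↦ hzb (huniq z hz.1 h.symm)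
  refine .inl ⟨⟨hz.1, c, d, ⟨hc.1, hcz⟩, ⟨hd.1, hdz⟩, fun h ↦ hcd ?_⟩, ?_⟩
  · rw [Set.sdiff_sdiff_comm]
    exact reachIn_diff_singleton_of_unique_adj (fun z' hz' ↦ huniq z' hz'.1) hc.2 hd.2 h
  · rwa [← neighborSet_inter_diff_singleton hza]

lemma ncard_le_two_and_exists_leaf [Finite V] (hS : ∀ c ∈ S, ∀ d ∈ S, reachIn G S c d)
    (ha : a ∈ S) (hleaf : (G.neighborSet a ∩ S).ncard = 1) (hcuts : oneCutsIn G S = ∅) :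
    (∀ v ∈ S, (G.neighborSet v ∩ S).ncard ≤ 2) ∧
      ∃ w ∈ S, w ≠ a ∧ (G.neighborSet w ∩ S).ncard = 1 := by
  induction hn : S.ncard using Nat.strong_induction_on generalizing S a with
  | _ n ih =>
  obtain ⟨b, hb⟩ := Set.ncard_eq_one.mp hleaf
  obtain ⟨hab, hbS⟩ : b ∈ G.neighborSet a ∩ S := hb ▸ rfl
  have huniq : ∀ z ∈ S, G.Adj a z → z = b := fun z hz hadj ↦
    (hb ▸ ⟨hadj, hz⟩ : z ∈ ({b} : Set V))
  have haNb : a ∈ G.neighborSet b ∩ S := ⟨hab.symm, ha⟩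
  have hdegb : (G.neighborSet b ∩ S).ncard ≤ 2 := by
    by_contra! h3
    obtain ⟨c, ⟨hbc, hc⟩, hca⟩ := Set.exists_ne_of_one_lt_ncard (s := G.neighborSet b ∩ S) (by omega) a
    have : b ∈ oneCutsIn G S := ⟨cutIn_of_unique_adj ha hab hbS huniq hc hca hbc.ne', h3⟩
    simp [hcuts] at this
  obtain hdegb1 | hdegb2 : (G.neighborSet b ∩ S).ncard = 1 ∨ (G.neighborSet b ∩ S).ncard = 2 := by
    have := (Set.ncard_pos).mpr ⟨a, haNb⟩
    omega
  · have hba : ∀ z ∈ S, G.Adj b z → z = a := fun z hz hadj ↦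
      (Set.ncard_le_one_iff (Set.toFinite _)).mp hdegb1.le ⟨hadj, hz⟩ haNb
    refine ⟨fun v hv ↦ ?_, b, hbS, hab.ne', hdegb1⟩
    rcases eq_or_eq_of_unique_adj hS ha huniq hba hv with rfl | rfl <;> omega
  · set S' := S \ {a}
    have hdeg' : ∀ v ∈ S, v ≠ b → (G.neighborSet v ∩ S').ncard = (G.neighborSet v ∩ S).ncard :=
      fun v hv hvb ↦ by rw [neighborSet_inter_diff_singleton fun h ↦ hvb (huniq v hv h.symm)]
    have hbS' : b ∈ S' := ⟨hbS, hab.ne'⟩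
    have hleaf' : (G.neighborSet b ∩ S').ncard = 1 := by
      rw [← Set.inter_sdiff_assoc, Set.ncard_sdiff_singleton_of_mem haNb, hdegb2]
    have hS' : ∀ c ∈ S', ∀ d ∈ S', reachIn G S' c d := fun c hc d hd ↦
      reachIn_diff_singleton_of_unique_adj huniq hc.2 hd.2 (hS c hc.1 d hd.1)
    have hcuts' : oneCutsIn G S' = ∅ := by
      refine Set.eq_empty_of_subset_empty fun z hz ↦ ?_
      rcases oneCutsIn_diff_singleton_subset huniq hz with hz' | rfl
      · rwa [hcuts] at hz'
      · have := hz.2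
        omega
    obtain ⟨hle, w, hw, hwb, hw1⟩ := ih _ (hn ▸ Set.ncard_sdiff_singleton_lt_of_mem ha) hS' hbS'
      hleaf' hcuts' rfl
    refine ⟨fun v hv ↦ ?_, w, hw.1, hw.2, hdeg' w hw.1 hwb ▸ hw1⟩
    rcases eq_or_ne v a with rfl | hva
    · omega
    rcases eq_or_ne v b with rfl | hvb
    · omega
    exact hdeg' v hv hvb ▸ hle v ⟨hv, hva⟩
  
section Biconnected

open SimpleGraph Walk

def JoinedByTwoPaths (G : SimpleGraph V) (u w : V) : Prop :=
  ∃ p q : G.Walk u w, p.IsPath ∧ q.IsPath ∧ p ≠ q ∧ InternallyDisjoint p q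

lemma InternallyDisjoint.symm {p q : G.Walk u w} (h : InternallyDisjoint p q) :
    InternallyDisjoint q p :=
  fun y hq hp ↦ h y hp hq

lemma Biconnected.not_cutIn (h : Biconnected G) : ¬ cutIn G Set.univ y := by
  rintro ⟨-, a, b, ⟨-, hay⟩, ⟨-, hby⟩, hab⟩
  rcases eq_or_ne a b with rfl | hne
  · exact hab .refl
  obtain ⟨p, q, -, -, -, hpq⟩ := h a b hne
  have avoid : ∀ r : G.Walk a b, y ∉ r.support → reachIn G (Set.univ \ {y}) a b :=
    fun r hr ↦ reachIn_of_walk r fun s hs ↦ ⟨trivial, fun hsy ↦ hr (hsy ▸ hs)⟩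
  by_cases hyp : y ∈ p.support
  · by_cases hyq : y ∈ q.support
    · rcases hpq y hyp hyq with rfl | rfl
      exacts [hay rfl, hby rfl]
    · exact hab (avoid q hyq)
  · exact hab (avoid p hyp)

lemma exists_walk_from_last_mem (M : Set V) (r : G.Walk u w) (h : ∃ y ∈ r.support, y ∈ M) :
    ∃ x ∈ M, ∃ r' : G.Walk x w, r'.support ⊆ r.support ∧ ∀ y ∈ r'.support, y ∈ M → y = x := by
  induction r with
  | nil =>
    obtain ⟨y, hy, hyM⟩ := h
    rw [support_nil, List.mem_singleton] at hy
    subst hy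
    exact ⟨y, hyM, .nil, by simp, by simp⟩
  | cons hadj r ih =>
    by_cases h' : ∃ y ∈ r.support, y ∈ M
    · obtain ⟨x, hx, r', hsub, hlast⟩ := ih h'
      exact ⟨x, hx, r', fun _ hz ↦ List.mem_cons_of_mem _ (hsub hz), hlast⟩
    · obtain ⟨y, hy, hyM⟩ := h
      rw [support_cons, List.mem_cons] at hy
      obtain rfl := hy.resolve_right fun hy ↦ h' ⟨y, hy, hyM⟩
      refine ⟨y, hyM, .cons hadj r, List.Subset.refl _, fun z hz hzM ↦ ?_⟩
      rw [support_cons, List.mem_cons] at hz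
      exact hz.resolve_right fun hz ↦ h' ⟨z, hz, hzM⟩

lemma joinedByTwoPaths_of_adj (hcut : ∀ y, ¬ cutIn G Set.univ y) (huw : G.Adj u w)
    (hcu : c ≠ u) (hcw : c ≠ w) : JoinedByTwoPaths G u w := by
  classical
  obtain rfl | ⟨z, hz, -⟩ :=
    Relation.ReflTransGen.cases_head (reachIn_of_not_cutIn (hcut u) huw.ne' hcu)
  · exact absurd rfl hcw
  obtain ⟨hwz, -, -, hzu⟩ := hz
  obtain ⟨W, hW⟩ := (reachIn_of_not_cutIn (hcut w) hwz.ne' huw.ne).exists_walk ⟨trivial, hwz.ne'⟩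
  have hws : w ∉ W.bypass.support := fun h ↦ (hW w (W.support_bypass_subset_support h)).2 rfl
  refine ⟨huw.toWalk, (cons hwz W.bypass).reverse, huw.isPath_toWalk,
    (cons_isPath_iff _ _).mpr ⟨W.bypass_isPath, hws⟩ |>.reverse, fun h ↦ ?_, fun y hy _ ↦ ?_⟩
  · have hlen := congrArg Walk.length h
    simp only [Adj.toWalk, length_cons, length_nil, length_reverse] at hlen
    exact hzu (eq_of_length_eq_zero (p := W.bypass) (by omega))
  · simpa [Adj.toWalk] using hy

/-- Extending two internally disjoint `u`-`v` paths to `u`-`w` paths, where `w` is a neighbour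
of `v`: one path is `p` up to `x` followed by `r`, the other is `q` followed by the edge `vw`. -/
lemma JoinedByTwoPaths.extend [DecidableEq V] {p q : G.Walk u v} (hp : p.IsPath)
    (hq : q.IsPath) (hpq : InternallyDisjoint p q) (hvw : G.Adj v w) (hwu : w ≠ u)
    {r : G.Walk x w} (hr : r.IsPath) (hxp : x ∈ p.support) (hvr : v ∉ r.support)
    (hlast : ∀ y ∈ r.support, y ∈ p.support ∨ y ∈ q.support → y = x) :
    JoinedByTwoPaths G u w := by
  have hvt : v ∉ (p.takeUntil x hxp).support :=
    endpoint_notMem_support_takeUntil hp hxp fun h ↦ hvr (h ▸ r.start_mem_support)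
  have htp : (p.takeUntil x hxp).support ⊆ p.support := p.support_takeUntil_subset_support hxp
  obtain ⟨hxtail, htail⟩ : x ∉ r.support.tail ∧ r.support.tail.Nodup :=
    List.nodup_cons.mp (r.cons_tail_support ▸ hr.support_nodup)
  have htail_sub : ∀ y ∈ r.support.tail, y ∈ r.support := fun _ ↦ List.mem_of_mem_tail
  have hwq : w ∉ q.support := fun hwq ↦ by
    obtain rfl := hlast w r.end_mem_support (.inr hwq)
    rcases hpq _ hxp hwq with h | h
    exacts [hwu h, hvw.ne' h]
  refine ⟨(p.takeUntil x hxp).append r, q.concat hvw, ?_, hq.concat hwq hvw, fun h ↦ ?_,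
    fun y hyP hyQ ↦ ?_⟩
  · refine IsPath.mk' ?_
    rw [support_append]
    exact (hp.takeUntil hxp).support_nodup.append htail fun y hyt hyr ↦
      hxtail (hlast y (htail_sub y hyr) (.inl (htp hyt)) ▸ hyr)
  · have hvQ : v ∈ (q.concat hvw).support := by simp [support_concat]
    rw [← h, support_append, List.mem_append] at hvQ
    exact hvQ.elim hvt fun hv ↦ hvr (htail_sub v hv)
  · rw [support_concat, List.mem_append, List.mem_singleton] at hyQ
    rcases hyQ with hyq | rfl
    · rw [support_append, List.mem_append] at hyP
      rcases hyP with hyt | hyr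
      · exact (hpq y (htp hyt) hyq).imp id fun hyv ↦ absurd (hyv ▸ hyt) hvt
      · exact absurd (hlast y (htail_sub y hyr) (.inr hyq) ▸ hyr) hxtail
    · exact .inr rfl

/-- Whitney's argument, by induction on `dist u w`: extend two paths from `u` to the neighbour `v`
of `w` on a geodesic by a `u`-`w` path avoiding `v`, from its last vertex on those two paths. -/
theorem biconnected_of_forall_not_cutIn [Finite V] (hconn : G.Connected)
    (hcard : 2 < Nat.card V) (hcut : ∀ y, ¬ cutIn G Set.univ y) : Biconnected G := by
  classical
  intro u w huw
  induction hn : G.dist u w using Nat.strong_induction_on generalizing w with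
  | _ n ih =>
  by_cases hadj : G.Adj u w
  · have hlt : ({u, w} : Set V).ncard < (Set.univ : Set V).ncard := by
      rw [Set.ncard_univ]
      exact (Set.ncard_insert_le _ _).trans_lt (by simpa using hcard)
    obtain ⟨c, -, hc⟩ := Set.exists_mem_notMem_of_ncard_lt_ncard hlt
    simp only [Set.mem_insert_iff, Set.mem_singleton_iff, not_or] at hc
    exact joinedByTwoPaths_of_adj hcut hadj hc.1 hc.2
  obtain ⟨W, hW⟩ := hconn.exists_walk_length_eq_dist u w
  obtain ⟨v, hwv, W', hW'⟩ := W.reverse.exists_eq_cons_of_ne huw.symm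
  have hdist : G.dist u v < n := by
    have := congrArg Walk.length hW'
    rw [length_reverse, hW, length_cons] at this
    have := G.dist_le W'.reverse
    rw [length_reverse] at this
    omega
  have huv : u ≠ v := by
    rintro rfl
    exact hadj hwv.symm
  obtain ⟨p, q, hp, hq, -, hpq⟩ := ih _ hdist v huv rfl
  obtain ⟨r, hr⟩ := (reachIn_of_not_cutIn (hcut v) huv hwv.ne).exists_walk ⟨trivial, huv⟩
  obtain ⟨x, hx, r', hr'r, hlast⟩ := exists_walk_from_last_mem {y | y ∈ p.support ∨ y ∈ q.support}
    r ⟨u, r.start_mem_support, .inl p.start_mem_support⟩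
  have hr'v : v ∉ r'.bypass.support := fun h ↦
    (hr v (hr'r (r'.support_bypass_subset_support h))).2 rfl
  have hlast' : ∀ y ∈ r'.bypass.support, y ∈ p.support ∨ y ∈ q.support → y = x :=
    fun y hy ↦ hlast y (r'.support_bypass_subset_support hy)
  rcases hx with hxp | hxq
  · exact JoinedByTwoPaths.extend hp hq hpq hwv.symm huw.symm r'.bypass_isPath hxp hr'v hlast'
  · exact JoinedByTwoPaths.extend hq hp hpq.symm hwv.symm huw.symm r'.bypass_isPath hxq hr'v
      fun y hy h ↦ hlast' y hy h.symm

end Biconnected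

section characterization

variable [Finite V]

lemma isPathGraph_of_card_eq_two (hconn : G.Connected) (hcard : Nat.card V = 2) :
    IsPathGraph G := by
  have hdeg : ∀ v, (G.neighborSet v).ncard = 1 := by
    intro v
    have : Nontrivial V := (Finite.one_lt_card_iff_nontrivial).mp (by omega)
    obtain ⟨u, hu⟩ := exists_ne v
    obtain ⟨w, hvw, -⟩ := exists_adj_reachIn hconn hu
    have hpos : 0 < (G.neighborSet v).ncard := (Set.ncard_pos).mpr ⟨w, hvw⟩
    have hle : (G.neighborSet v).ncard ≤ (Set.univ \ {v}).ncard :=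
      Set.ncard_le_ncard fun w hvw ↦ ⟨trivial, hvw.ne'⟩
    rw [Set.ncard_sdiff_singleton_of_mem (Set.mem_univ v), Set.ncard_univ, hcard] at hle
    omega
  obtain ⟨v⟩ := hconn.nonempty
  exact ⟨hconn, fun v ↦ (hdeg v).trans_le one_le_two, v, hdeg v⟩

lemma isPathGraph_of_cutIn (hconn : G.Connected) (hcuts : oneCutsIn G Set.univ = ∅)
    (hy : cutIn G Set.univ y) : IsPathGraph G := by
  obtain ⟨-, a, b, ⟨-, hay⟩, ⟨-, hby⟩, hab⟩ := hy
  have hdegy : (G.neighborSet y).ncard ≤ 2 := by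
    by_contra! h
    have : y ∈ oneCutsIn G Set.univ :=
      ⟨⟨trivial, a, b, ⟨trivial, hay⟩, ⟨trivial, hby⟩, hab⟩, by rwa [Set.inter_univ]⟩
    simp [hcuts] at this
  obtain ⟨na, hyna, hana⟩ := exists_adj_reachIn hconn hay
  obtain ⟨nb, hynb, hbnb⟩ := exists_adj_reachIn hconn hby
  have hside : ∀ v, v ≠ y →
      (∀ w ∈ componentOf G y v, (G.neighborSet w ∩ componentOf G y v).ncard ≤ 2) ∧
        ∃ w ∈ componentOf G y v, w ≠ y ∧
          (G.neighborSet w ∩ componentOf G y v).ncard = 1 := by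
    intro v hvy
    refine ncard_le_two_and_exists_leaf (fun c hc d hd ↦ reachIn_componentOf hconn hvy hc hd)
      left_mem_componentOf ?_ (Set.eq_empty_of_forall_notMem fun z hz ↦ by
        simpa [hcuts] using oneCutsIn_componentOf_subset hz)
    obtain ⟨u, hyu, hvu⟩ := exists_adj_reachIn hconn hvy
    have hpos : 0 < (G.neighborSet y ∩ componentOf G y v).ncard :=
      (Set.ncard_pos).mpr ⟨u, hyu, Or.inl hvu⟩
    have hssub : G.neighborSet y ∩ componentOf G y v ⊂ G.neighborSet y := by
      refine Set.inter_subset_left.ssubset_of_not_subset fun h ↦ hab ?_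
      have hvna := ((h hyna).2.resolve_right hyna.ne').symm
      have hvnb := ((h hynb).2.resolve_right hynb.ne')
      exact hana.trans (hvna.trans (hvnb.trans hbnb.symm))
    have := Set.ncard_lt_ncard hssub
    omega
  refine ⟨hconn, fun v ↦ ?_, ?_⟩
  · rcases eq_or_ne v y with rfl | hvy
    · exact hdegy
    · simpa [neighborSet_inter_componentOf right_mem_componentOf hvy] using
        (hside v hvy).1 v right_mem_componentOf
  · obtain ⟨w, hw, hwy, hw1⟩ := (hside a hay).2
    exact ⟨w, by rwa [neighborSet_inter_componentOf hw hwy] at hw1⟩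

lemma oneCutsIn_univ_eq_empty_iff (hconn : G.Connected) :
    oneCutsIn G Set.univ = ∅ ↔
      Biconnected G ∨ (∃ v : V, ∀ w : V, w = v) ∨ IsPathGraph G := by
  constructor
  · intro hcuts
    by_cases hcut : ∃ y, cutIn G Set.univ y
    · obtain ⟨y, hy⟩ := hcut
      exact .inr (.inr (isPathGraph_of_cutIn hconn hcuts hy))
    push Not at hcut
    have : Nonempty V := hconn.nonempty
    obtain h1 | h2 | h3 : Nat.card V = 1 ∨ Nat.card V = 2 ∨ 2 < Nat.card V := by
      have := Nat.card_pos (α := V)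
      omega
    · exact .inr (.inl (Nat.card_eq_one_iff_exists.mp h1))
    · exact .inr (.inr (isPathGraph_of_card_eq_two hconn h2))
    · exact .inl (biconnected_of_forall_not_cutIn hconn h3 hcut)
  · refine fun h ↦ Set.eq_empty_of_forall_notMem fun y ⟨hy, hdeg⟩ ↦ ?_
    rcases h with hbi | ⟨v, hv⟩ | ⟨-, hle, -⟩
    · exact hbi.not_cutIn hy
    · obtain ⟨-, a, -, ⟨-, hay⟩, -⟩ := hy
      exact hay ((hv a).trans (hv y).symm)
    · rw [Set.inter_univ] at hdeg
      exact absurd (hle y) (by omega)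

end characterization

/-- For a connected graph `Γ` with simplicial model `G`:
(1) if `G` has at least one 1-cut, then it has a 1-cut `x` such that every
`{x}`-component has strictly fewer 1-cuts (in its own minimal simplicial
model) than `G`; and (2) `G` has no 1-cuts if and only if it is biconnected,
a single vertex, or homeomorphic to the single-edge graph `K₁,₁`. -/
theorem oneCut_induction_and_characterization
    [Fintype V] (G : SimpleGraph V) (hconn : G.Connected) :
    ((oneCutsIn G Set.univ).Nonempty →
      ∃ x ∈ oneCutsIn G Set.univ, ∀ a : V, a ≠ x →
        (oneCutsIn G (componentOf G x a)).ncard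
          < (oneCutsIn G Set.univ).ncard) ∧
    (oneCutsIn G Set.univ = ∅ ↔
      (Biconnected G ∨ (∃ v : V, ∀ w : V, w = v) ∨ IsPathGraph G)) := by
  refine ⟨fun ⟨x, hx⟩ ↦ ⟨x, hx, fun a _ ↦ ?_⟩, oneCutsIn_univ_eq_empty_iff hconn⟩
  calc (oneCutsIn G (componentOf G x a)).ncard
      ≤ (oneCutsIn G Set.univ \ {x}).ncard := Set.ncard_le_ncard oneCutsIn_componentOf_subset
    _ < (oneCutsIn G Set.univ).ncard := Set.ncard_sdiff_singleton_lt_of_mem hx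

end GraphOneCuts
end
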